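/- arXiv:1610.02754 — 10 statements merged into one kernel-verified Lean document; each statement's English description precedes it below -/
import Mathlib

section
/- Let σ=(σ_1,...,σ_n) and τ=(τ_1,...,τ_n) be two sequences of positive integers differing exactly at indices n_1 < ... < n_t, and suppose max over these indices of σ_{n_i}+1 and τ_{n_i}+1 is at most ψ(n) for some ψ(n). If ε>0 and 2^{(n-1)ε} ≥ 2 ψ(n)^{2t}, then the lengths of the corresponding rank-n basic intervals satisfy |I_n(τ)|^{1+ε} ≤ |I_n(σ)| ≤ |I_n(τ)|^{1-ε}. -/
open Filter MeasureTheory Set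

/-- The Gauss map. -/
noncomputable def gaussMap (x : ℝ) : ℝ := Int.fract x⁻¹

/-- The `n`-th continued fraction partial quotient of `x` (1-indexed). -/
noncomputable def cfA (x : ℝ) (n : ℕ) : ℕ := ⌊(gaussMap^[n - 1] x)⁻¹⌋₊

/-- The rank-`n` basic interval with prescribed partial quotients `a 1, …, a n`. -/
def basicIntervalSeq (a : ℕ → ℕ) (n : ℕ) : Set ℝ :=
  {x : ℝ | x ∈ Set.Ioo (0 : ℝ) 1 ∧ Irrational x ∧ ∀ j, 1 ≤ j → j ≤ n → cfA x j = a j}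

/-!
Since `I_{n+1}(a)` is the preimage of `I_n(a_2, a_3, …)` under `x ↦ 1/x - a_1`, induction shows
that `I_n(a)` consists of the irrationals strictly between `p_n / q_n` and
`(p_n + p_{n-1}) / (q_n + q_{n-1})`, the images of `0` and `1` under the Möbius map of
`!![p_{n-1}, p_n; q_{n-1}, q_n] = ∏ₖ !![0, 1; 1, a_k]`. This matrix has determinant `±1`, so
`|I_n(a)| = 1 / (q_n (q_n + q_{n-1}))`, which lies between `1 / (2 q_n²)` and `1 / q_n²` and is at
most `2⁻ⁿ`.

Entrywise, `!![0, 1; 1, b] ≤ b • !![0, 1; 1, c]` for `b, c ≥ 1`, and products of nonnegative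
matrices are monotone, so `q_n(σ) ≤ (∏ᵢ σ_{n_i}) q_n(τ) ≤ ψ^t q_n(τ)`. Hence
`|I_n(τ)| ≤ 2 ψ^{2t} |I_n(σ)|` and symmetrically, and the growth condition makes
`2 ψ^{2t} |I_n(τ)|^ε ≤ 1`, which turns these two comparisons into the exponent bounds.
-/

noncomputable def mobius (M : Matrix (Fin 2) (Fin 2) ℝ) (y : ℝ) : ℝ :=
  (M 0 0 * y + M 0 1) / (M 1 0 * y + M 1 1)

lemma mobius_mul (A B : Matrix (Fin 2) (Fin 2) ℝ) {y : ℝ} (hy : B 1 0 * y + B 1 1 ≠ 0) :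
    mobius (A * B) y = mobius A (mobius B y) := by
  simp only [mobius, Matrix.mul_apply, Fin.sum_univ_two]
  rw [← mul_div_mul_right _ (A 1 0 * _ + _) hy]
  congr 1 <;> field_simp <;> ring

lemma mobius_one_sub_mobius_zero (M : Matrix (Fin 2) (Fin 2) ℝ) (h₁ : M 1 1 ≠ 0)
    (h₂ : M 1 1 + M 1 0 ≠ 0) :
    mobius M 1 - mobius M 0 = M.det / (M 1 1 * (M 1 1 + M 1 0)) := by
  simp only [mobius, mul_one, mul_zero, zero_add]
  rw [add_comm (M 1 0), div_sub_div _ _ h₂ h₁, Matrix.det_fin_two, mul_comm (M 1 1 + M 1 0)]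
  ring

lemma mobius_one (y : ℝ) : mobius 1 y = y := by simp [mobius]

lemma mobius_nonneg {M : Matrix (Fin 2) (Fin 2) ℝ} (hM : ∀ i j, 0 ≤ M i j) {y : ℝ} (hy : 0 ≤ y) :
    0 ≤ mobius M y :=
  div_nonneg (add_nonneg (mul_nonneg (hM 0 0) hy) (hM 0 1))
    (add_nonneg (mul_nonneg (hM 1 0) hy) (hM 1 1))

lemma Matrix.mul_apply_le_mul_mul_apply {l m n : Type*} [Fintype m] {A A' : Matrix l m ℝ}
    {B B' : Matrix m n ℝ} {c d : ℝ} (hA : ∀ i j, 0 ≤ A i j) (hB : ∀ i j, 0 ≤ B i j)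
    (hAA' : ∀ i j, A i j ≤ c * A' i j) (hBB' : ∀ i j, B i j ≤ d * B' i j) (i : l) (k : n) :
    (A * B) i k ≤ c * d * (A' * B') i k := by
  simp only [Matrix.mul_apply, Finset.mul_sum]
  refine Finset.sum_le_sum fun j _ => ?_
  calc A i j * B j k ≤ (c * A' i j) * (d * B' j k) :=
        mul_le_mul (hAA' i j) (hBB' j k) (hB j k) ((hA i j).trans (hAA' i j))
    _ = c * d * (A' i j * B' j k) := by ring

lemma preimage_inv_sub_uIoo {b u v : ℝ} (hb : 0 < b) (hu : 0 ≤ u) (hv : 0 ≤ v) :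
    (fun x => x⁻¹ - b) ⁻¹' uIoo u v = uIoo (u + b)⁻¹ (v + b)⁻¹ := by
  wlog huv : u ≤ v generalizing u v
  · rw [uIoo_comm, this hv hu (le_of_not_ge huv), uIoo_comm]
  rw [uIoo_of_le huv, uIoo_of_ge (inv_anti₀ (by positivity) (by linarith))]
  ext x
  simp only [mem_preimage, mem_Ioo, sub_lt_iff_lt_add, lt_sub_iff_add_lt]
  constructor
  · rintro ⟨h1, h2⟩
    have hx : 0 < x := inv_pos.mp (by linarith)
    exact ⟨(inv_lt_comm₀ hx (by linarith)).mp h2, (lt_inv_comm₀ (by linarith) hx).mp h1⟩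
  · rintro ⟨h1, h2⟩
    have hx : 0 < x := lt_trans (by positivity) h1
    exact ⟨(lt_inv_comm₀ (by linarith) hx).mpr h2, (inv_lt_comm₀ hx (by linarith)).mpr h1⟩

lemma volume_setOf_irrational_inter (s : Set ℝ) :
    volume ({x | Irrational x} ∩ s) = volume s := by
  rw [inter_comm]
  refine measure_inter_conull ?_
  have hrat : {x : ℝ | Irrational x}ᶜ = range ((↑) : ℚ → ℝ) := by ext; simp [Irrational]
  rw [hrat]
  exact (countable_range _).measure_zero volume

lemma rpow_one_add_le_and_le_rpow_one_sub {x y C ε : ℝ} (hx : 0 ≤ x) (hy : 0 < y)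
    (hyx : y ≤ C * x) (hxy : x ≤ C * y) (hC : C * y ^ ε ≤ 1) :
    y ^ (1 + ε) ≤ x ∧ x ≤ y ^ (1 - ε) := by
  have hyε := Real.rpow_nonneg hy.le ε
  constructor
  · calc y ^ (1 + ε) = y * y ^ ε := by rw [Real.rpow_add hy, Real.rpow_one]
      _ ≤ C * x * y ^ ε := by gcongr
      _ = x * (C * y ^ ε) := by ring
      _ ≤ x := mul_le_of_le_one_right hx hC
  · calc x ≤ C * y := hxy
      _ = y ^ (1 - ε) * (C * y ^ ε) := by
        rw [mul_left_comm, ← Real.rpow_add hy, sub_add_cancel, Real.rpow_one]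
      _ ≤ y ^ (1 - ε) := mul_le_of_le_one_right (Real.rpow_nonneg hy.le _) hC

def partialQuotientMatrix (b : ℕ) : Matrix (Fin 2) (Fin 2) ℝ := !![0, 1; 1, b]

lemma partialQuotientMatrix_nonneg (b : ℕ) (i j : Fin 2) : 0 ≤ partialQuotientMatrix b i j := by
  fin_cases i <;> fin_cases j <;> simp [partialQuotientMatrix]

lemma mobius_partialQuotientMatrix (b : ℕ) (z : ℝ) : mobius (partialQuotientMatrix b) z = (z + b)⁻¹ := by
  simp [mobius, partialQuotientMatrix]

lemma det_partialQuotientMatrix (b : ℕ) : (partialQuotientMatrix b).det = -1 := by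
  simp [partialQuotientMatrix, Matrix.det_fin_two_of]

lemma partialQuotientMatrix_apply_le {b c : ℕ} (hb : 1 ≤ b) (hc : 1 ≤ c) (i j : Fin 2) :
    partialQuotientMatrix b i j ≤ b * partialQuotientMatrix c i j := by
  have hb' : (1 : ℝ) ≤ b := by exact_mod_cast hb
  have hc' : (1 : ℝ) ≤ c := by exact_mod_cast hc
  fin_cases i <;> fin_cases j <;> simp [partialQuotientMatrix] <;> nlinarith

/-- `cfMatrix a n = !![p_{n-1}, p_n; q_{n-1}, q_n]`, where `p_k / q_k` are the convergents of
`[0; a 1, a 2, …]`. -/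
def cfMatrix (a : ℕ → ℕ) (n : ℕ) : Matrix (Fin 2) (Fin 2) ℝ :=
  ((List.range n).map fun k => partialQuotientMatrix (a (k + 1))).prod

@[simp] lemma cfMatrix_zero (a : ℕ → ℕ) : cfMatrix a 0 = 1 := rfl

lemma cfMatrix_succ (a : ℕ → ℕ) (n : ℕ) :
    cfMatrix a (n + 1) = cfMatrix a n * partialQuotientMatrix (a (n + 1)) := by
  simp [cfMatrix, List.range_succ]

lemma cfMatrix_succ' (a : ℕ → ℕ) (n : ℕ) :
    cfMatrix a (n + 1) = partialQuotientMatrix (a 1) * cfMatrix (fun j => a (j + 1)) n := by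
  simp [cfMatrix, List.range_succ_eq_map, Function.comp_def]

lemma cfMatrix_succ_apply_zero (a : ℕ → ℕ) (n : ℕ) (i : Fin 2) :
    cfMatrix a (n + 1) i 0 = cfMatrix a n i 1 := by
  simp [cfMatrix_succ, partialQuotientMatrix, Matrix.mul_apply]

lemma cfMatrix_succ_apply_one (a : ℕ → ℕ) (n : ℕ) (i : Fin 2) :
    cfMatrix a (n + 1) i 1 = cfMatrix a n i 0 + a (n + 1) * cfMatrix a n i 1 := by
  simp [cfMatrix_succ, partialQuotientMatrix, Matrix.mul_apply, mul_comm]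

lemma cfMatrix_nonneg (a : ℕ → ℕ) (n : ℕ) (i j : Fin 2) : 0 ≤ cfMatrix a n i j := by
  induction n generalizing j with
  | zero => fin_cases i <;> fin_cases j <;> simp
  | succ n ih =>
    fin_cases j
    · simpa [cfMatrix_succ_apply_zero] using ih 1
    · simpa [cfMatrix_succ_apply_one] using add_nonneg (ih 0) (mul_nonneg (by positivity) (ih 1))

lemma det_cfMatrix (a : ℕ → ℕ) (n : ℕ) : (cfMatrix a n).det = (-1) ^ n := by
  induction n with
  | zero => simp
  | succ n ih => rw [cfMatrix_succ, Matrix.det_mul, ih, det_partialQuotientMatrix, pow_succ]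

lemma one_le_cfMatrix_one_one {a : ℕ → ℕ} {n : ℕ} (ha : ∀ j, 1 ≤ j → j ≤ n → 1 ≤ a j) :
    1 ≤ cfMatrix a n 1 1 := by
  induction n with
  | zero => simp
  | succ n ih =>
    have ih := ih fun j hj hjn => ha j hj (by omega)
    have han : (1 : ℝ) ≤ a (n + 1) := by exact_mod_cast ha (n + 1) (by omega) le_rfl
    rw [cfMatrix_succ_apply_one]
    nlinarith [cfMatrix_nonneg a n 1 0]

lemma cfMatrix_one_zero_le {a : ℕ → ℕ} {n : ℕ} (ha : ∀ j, 1 ≤ j → j ≤ n → 1 ≤ a j) :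
    cfMatrix a n 1 0 ≤ cfMatrix a n 1 1 := by
  cases n with
  | zero => simp
  | succ n =>
    have han : (1 : ℝ) ≤ a (n + 1) := by exact_mod_cast ha (n + 1) (by omega) le_rfl
    rw [cfMatrix_succ_apply_zero, cfMatrix_succ_apply_one]
    nlinarith [cfMatrix_nonneg a n 1 0, cfMatrix_nonneg a n 1 1]

lemma two_pow_le_cfMatrix {a : ℕ → ℕ} {n : ℕ} (ha : ∀ j, 1 ≤ j → j ≤ n → 1 ≤ a j) :
    (2 : ℝ) ^ n ≤ cfMatrix a n 1 1 * (cfMatrix a n 1 1 + cfMatrix a n 1 0) := by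
  induction n with
  | zero => simp
  | succ n ih =>
    have ih := ih fun j hj hjn => ha j hj (by omega)
    have han : (1 : ℝ) ≤ a (n + 1) := by exact_mod_cast ha (n + 1) (by omega) le_rfl
    have hq' := cfMatrix_nonneg a n 1 0
    have hq := cfMatrix_nonneg a n 1 1
    have hgrow : cfMatrix a n 1 0 + cfMatrix a n 1 1 ≤ cfMatrix a (n + 1) 1 1 := by
      rw [cfMatrix_succ_apply_one]; nlinarith
    rw [cfMatrix_succ_apply_zero, pow_succ]
    nlinarith

lemma cfMatrix_apply_le_prod_mul {σ τ : ℕ → ℕ} {n : ℕ} (w : ℕ → ℝ)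
    (hw : ∀ k, 1 ≤ k → k ≤ n → ∀ i j, partialQuotientMatrix (σ k) i j ≤ w k * partialQuotientMatrix (τ k) i j)
    (i j : Fin 2) :
    cfMatrix σ n i j ≤ (∏ k ∈ Finset.Icc 1 n, w k) * cfMatrix τ n i j := by
  induction n generalizing i j with
  | zero => simp
  | succ n ih =>
    rw [cfMatrix_succ, cfMatrix_succ, Finset.prod_Icc_succ_top (by omega)]
    exact Matrix.mul_apply_le_mul_mul_apply (cfMatrix_nonneg σ n) (partialQuotientMatrix_nonneg _)
      (ih fun k hk hkn => hw k hk (by omega)) (hw (n + 1) (by omega) le_rfl) i j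

lemma cfMatrix_one_one_le_prod_mul {σ τ : ℕ → ℕ} {n : ℕ} {Ω : Finset ℕ}
    (hσ : ∀ j, 1 ≤ j → j ≤ n → 1 ≤ σ j) (hτ : ∀ j, 1 ≤ j → j ≤ n → 1 ≤ τ j)
    (hΩ : Ω ⊆ Finset.Icc 1 n) (hagree : ∀ j ∈ Finset.Icc 1 n, j ∉ Ω → σ j = τ j) :
    cfMatrix σ n 1 1 ≤ (∏ i ∈ Ω, (σ i : ℝ)) * cfMatrix τ n 1 1 := by
  have key := cfMatrix_apply_le_prod_mul (σ := σ) (τ := τ) (n := n)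
    (fun k => if k ∈ Ω then (σ k : ℝ) else 1) ?_ 1 1
  · rwa [Finset.prod_ite_mem, Finset.inter_eq_right.mpr hΩ] at key
  intro k hk hkn i j
  split_ifs with hkΩ
  · exact partialQuotientMatrix_apply_le (hσ k hk hkn) (hτ k hk hkn) i j
  · rw [hagree k (Finset.mem_Icc.mpr ⟨hk, hkn⟩) hkΩ, one_mul]

lemma mobius_cfMatrix_succ {a : ℕ → ℕ} {n : ℕ} (ha : ∀ j, 1 ≤ j → j ≤ n + 1 → 1 ≤ a j)
    {y : ℝ} (hy : 0 ≤ y) :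
    mobius (cfMatrix a (n + 1)) y = (mobius (cfMatrix (fun j => a (j + 1)) n) y + a 1)⁻¹ := by
  have hq := one_le_cfMatrix_one_one (a := fun j => a (j + 1)) (n := n)
    fun j hj hjn => ha (j + 1) (by omega) (by omega)
  rw [cfMatrix_succ', mobius_mul _ _ (by nlinarith [cfMatrix_nonneg (fun j => a (j + 1)) n 1 0]),
    mobius_partialQuotientMatrix]

lemma cfA_succ (x : ℝ) {j : ℕ} (hj : 1 ≤ j) : cfA x (j + 1) = cfA (gaussMap x) j := by
  obtain ⟨i, rfl⟩ := Nat.exists_eq_add_of_le' hj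
  simp [cfA, Function.iterate_succ_apply]

lemma floor_inv_eq_and_gaussMap_eq {x : ℝ} {b : ℕ} (h : x⁻¹ - b ∈ Ioo (0 : ℝ) 1) :
    ⌊x⁻¹⌋₊ = b ∧ gaussMap x = x⁻¹ - b := by
  obtain ⟨h0, h1⟩ := h
  refine ⟨Nat.floor_eq_iff (by linarith [b.cast_nonneg (α := ℝ)]) |>.mpr ⟨by linarith, by linarith⟩,
    Int.fract_eq_iff.mpr ⟨h0.le, h1, b, by simp⟩⟩

lemma inv_sub_mem_Ioo_of_floor_inv_eq {x : ℝ} {b : ℕ} (hx : 0 < x) (hirr : Irrational x)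
    (h : ⌊x⁻¹⌋₊ = b) : x⁻¹ - b ∈ Ioo (0 : ℝ) 1 := by
  obtain ⟨hle, hlt⟩ := (Nat.floor_eq_iff (inv_pos.mpr hx).le).mp h
  have hne : x⁻¹ ≠ b := (irrational_inv_iff.mpr hirr).ne_nat b
  exact ⟨sub_pos.mpr (lt_of_le_of_ne hle hne.symm), by linarith⟩

lemma irrational_inv_sub_natCast_iff {x : ℝ} {b : ℕ} : Irrational (x⁻¹ - b) ↔ Irrational x :=
  irrational_sub_natCast_iff.trans irrational_inv_iff

lemma basicIntervalSeq_succ (a : ℕ → ℕ) (n : ℕ) (ha : 1 ≤ a 1) :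
    basicIntervalSeq a (n + 1) =
      (fun x : ℝ => x⁻¹ - a 1) ⁻¹' basicIntervalSeq (fun j => a (j + 1)) n := by
  ext x
  simp only [basicIntervalSeq, mem_preimage, mem_ofPred_eq, irrational_inv_sub_natCast_iff]
  constructor
  · rintro ⟨hx, hirr, hcf⟩
    have hy := inv_sub_mem_Ioo_of_floor_inv_eq hx.1 hirr (hcf 1 le_rfl (by omega))
    refine ⟨hy, hirr, fun j hj hjn => ?_⟩
    rw [← (floor_inv_eq_and_gaussMap_eq hy).2, ← cfA_succ x hj]
    exact hcf (j + 1) (by omega) (by omega)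
  · rintro ⟨hy, hirr, hcf⟩
    obtain ⟨hfloor, hgauss⟩ := floor_inv_eq_and_gaussMap_eq hy
    have hx : x ∈ Ioo (0 : ℝ) 1 := by
      have : (1 : ℝ) ≤ a 1 := by exact_mod_cast ha
      exact one_lt_inv_iff₀.mp (by linarith [hy.1])
    refine ⟨hx, hirr, fun j hj hjn => ?_⟩
    obtain rfl | ⟨i, hi, rfl⟩ : j = 1 ∨ ∃ i, 1 ≤ i ∧ j = i + 1 :=
      (eq_or_lt_of_le hj).imp Eq.symm fun h => ⟨j - 1, by omega, by omega⟩
    · exact hfloor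
    · rw [cfA_succ x hi, hgauss]
      exact hcf i hi (by omega)

lemma basicIntervalSeq_eq_inter_uIoo {a : ℕ → ℕ} {n : ℕ} (ha : ∀ j, 1 ≤ j → j ≤ n → 1 ≤ a j) :
    basicIntervalSeq a n =
      {x | Irrational x} ∩ uIoo (mobius (cfMatrix a n) 0) (mobius (cfMatrix a n) 1) := by
  induction n generalizing a with
  | zero =>
    rw [cfMatrix_zero, mobius_one, mobius_one, uIoo_of_le zero_le_one]
    ext x
    exact ⟨fun ⟨hx, hirr, _⟩ => ⟨hirr, hx⟩, fun ⟨hirr, hx⟩ => ⟨hx, hirr, fun j hj hj0 => by omega⟩⟩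
  | succ n ih =>
    have ha1 : (0 : ℝ) < a 1 := by exact_mod_cast ha 1 le_rfl (by omega)
    rw [basicIntervalSeq_succ a n (ha 1 le_rfl (by omega)),
      ih fun j hj hjn => ha (j + 1) (by omega) (by omega), preimage_inter,
      preimage_inv_sub_uIoo ha1 (mobius_nonneg (cfMatrix_nonneg _ n) le_rfl)
        (mobius_nonneg (cfMatrix_nonneg _ n) zero_le_one),
      mobius_cfMatrix_succ ha le_rfl, mobius_cfMatrix_succ ha zero_le_one]
    congr 1
    ext x
    exact irrational_inv_sub_natCast_iff

lemma toReal_volume_basicIntervalSeq {a : ℕ → ℕ} {n : ℕ} (ha : ∀ j, 1 ≤ j → j ≤ n → 1 ≤ a j) :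
    (volume (basicIntervalSeq a n)).toReal =
      (cfMatrix a n 1 1 * (cfMatrix a n 1 1 + cfMatrix a n 1 0))⁻¹ := by
  have hq := one_le_cfMatrix_one_one ha
  have hq' := cfMatrix_nonneg a n 1 0
  rw [basicIntervalSeq_eq_inter_uIoo ha, volume_setOf_irrational_inter, uIoo, Real.volume_Ioo,
    ENNReal.toReal_ofReal (sub_nonneg.mpr inf_le_sup), max_sub_min_eq_abs', abs_sub_comm,
    mobius_one_sub_mobius_zero _ (by positivity) (by positivity), det_cfMatrix, abs_div,
    abs_pow, abs_neg, abs_one, one_pow, abs_of_pos (by positivity), one_div]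

lemma toReal_volume_basicIntervalSeq_pos {a : ℕ → ℕ} {n : ℕ}
    (ha : ∀ j, 1 ≤ j → j ≤ n → 1 ≤ a j) : 0 < (volume (basicIntervalSeq a n)).toReal := by
  rw [toReal_volume_basicIntervalSeq ha]
  have := one_le_cfMatrix_one_one ha
  have := cfMatrix_nonneg a n 1 0
  exact inv_pos.mpr (by nlinarith)

lemma toReal_volume_basicIntervalSeq_le {a : ℕ → ℕ} {n : ℕ}
    (ha : ∀ j, 1 ≤ j → j ≤ n → 1 ≤ a j) : (volume (basicIntervalSeq a n)).toReal ≤ (2 ^ n)⁻¹ := by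
  rw [toReal_volume_basicIntervalSeq ha]
  exact inv_anti₀ (by positivity) (two_pow_le_cfMatrix ha)

lemma toReal_volume_basicIntervalSeq_le_mul {σ τ : ℕ → ℕ} {n : ℕ} {Ω : Finset ℕ} {ψ : ℝ}
    (hσ : ∀ j, 1 ≤ j → j ≤ n → 1 ≤ σ j) (hτ : ∀ j, 1 ≤ j → j ≤ n → 1 ≤ τ j)
    (hΩ : Ω ⊆ Finset.Icc 1 n) (hagree : ∀ j ∈ Finset.Icc 1 n, j ∉ Ω → σ j = τ j)
    (hψ : ∀ i ∈ Ω, (σ i : ℝ) ≤ ψ) :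
    (volume (basicIntervalSeq τ n)).toReal ≤
      2 * ψ ^ (2 * Ω.card) * (volume (basicIntervalSeq σ n)).toReal := by
  rw [toReal_volume_basicIntervalSeq hσ, toReal_volume_basicIntervalSeq hτ]
  set qσ := cfMatrix σ n 1 1
  set qτ := cfMatrix τ n 1 1
  have hqσ : 1 ≤ qσ := one_le_cfMatrix_one_one hσ
  have hqτ : 1 ≤ qτ := one_le_cfMatrix_one_one hτ
  have hq'σ := cfMatrix_one_zero_le hσ
  have hq'σ₀ := cfMatrix_nonneg σ n 1 0
  have hq'τ₀ := cfMatrix_nonneg τ n 1 0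
  have hprod : ∏ i ∈ Ω, (σ i : ℝ) ≤ ψ ^ Ω.card :=
    (Finset.prod_le_prod (fun i _ => by positivity) hψ).trans_eq (Finset.prod_const ψ)
  have hcomp : qσ ≤ ψ ^ Ω.card * qτ := (cfMatrix_one_one_le_prod_mul hσ hτ hΩ hagree).trans
    (mul_le_mul_of_nonneg_right hprod (by linarith))
  have hC : 0 ≤ 2 * ψ ^ (2 * Ω.card) := by rw [pow_mul]; positivity
  have hden : qσ * (qσ + cfMatrix σ n 1 0) ≤
      2 * ψ ^ (2 * Ω.card) * (qτ * (qτ + cfMatrix τ n 1 0)) :=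
    calc qσ * (qσ + cfMatrix σ n 1 0) ≤ 2 * qσ ^ 2 := by nlinarith
      _ ≤ 2 * (ψ ^ Ω.card * qτ) ^ 2 := by gcongr
      _ = 2 * ψ ^ (2 * Ω.card) * qτ ^ 2 := by ring
      _ ≤ 2 * ψ ^ (2 * Ω.card) * (qτ * (qτ + cfMatrix τ n 1 0)) :=
        mul_le_mul_of_nonneg_left (by nlinarith) hC
  rw [← div_eq_mul_inv, le_div_iff₀ (by positivity), inv_mul_le_iff₀ (by positivity)]
  linarith

theorem stmt_3_general (n : ℕ) (σ τ : ℕ → ℕ)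
    (hσ : ∀ j, 1 ≤ j → j ≤ n → 1 ≤ σ j) (hτ : ∀ j, 1 ≤ j → j ≤ n → 1 ≤ τ j)
    (Ω : Finset ℕ) (hΩsub : Ω ⊆ Finset.Icc 1 n)
    (hdiff : ∀ j ∈ Finset.Icc 1 n, (j ∈ Ω ↔ σ j ≠ τ j))
    (ψ : ℝ) (hψ : ∀ i ∈ Ω, (σ i : ℝ) + 1 ≤ ψ ∧ (τ i : ℝ) + 1 ≤ ψ)
    (ε : ℝ) (hε : 0 < ε)
    (hgrowth : 2 * ψ ^ (2 * Ω.card) ≤ (2 : ℝ) ^ (((n : ℝ) - 1) * ε)) :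
    (volume (basicIntervalSeq τ n)).toReal ^ (1 + ε)
        ≤ (volume (basicIntervalSeq σ n)).toReal ∧
    (volume (basicIntervalSeq σ n)).toReal
        ≤ (volume (basicIntervalSeq τ n)).toReal ^ (1 - ε) := by
  have hagree : ∀ j ∈ Finset.Icc 1 n, j ∉ Ω → σ j = τ j := fun j hj hjΩ =>
    not_not.mp (mt (hdiff j hj).mpr hjΩ)
  have hτσ := toReal_volume_basicIntervalSeq_le_mul (ψ := ψ) hσ hτ hΩsub hagree
    fun i hi => by linarith [(hψ i hi).1]
  have hστ := toReal_volume_basicIntervalSeq_le_mul (ψ := ψ) hτ hσ hΩsub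
    (fun j hj hjΩ => (hagree j hj hjΩ).symm) fun i hi => by linarith [(hψ i hi).2]
  refine rpow_one_add_le_and_le_rpow_one_sub ENNReal.toReal_nonneg
    (toReal_volume_basicIntervalSeq_pos hτ) hτσ hστ ?_
  calc 2 * ψ ^ (2 * Ω.card) * (volume (basicIntervalSeq τ n)).toReal ^ ε
      ≤ (2 : ℝ) ^ (((n : ℝ) - 1) * ε) * ((2 : ℝ) ^ n)⁻¹ ^ ε :=
        mul_le_mul hgrowth (Real.rpow_le_rpow ENNReal.toReal_nonneg
          (toReal_volume_basicIntervalSeq_le hτ) hε.le) (by positivity) (by positivity)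
    _ = 2 ^ (-ε) := by
        rw [Real.inv_rpow (by positivity), ← Real.rpow_natCast, ← Real.rpow_mul zero_le_two,
          ← div_eq_mul_inv, ← Real.rpow_sub two_pos]
        ring_nf
    _ ≤ 1 := Real.rpow_le_one_of_one_le_of_nonpos one_le_two (by linarith)

theorem stmt_3 (n : ℕ) (hn : 1 ≤ n) (σ τ : ℕ → ℕ)
    (hσ : ∀ j, 1 ≤ j → j ≤ n → 1 ≤ σ j) (hτ : ∀ j, 1 ≤ j → j ≤ n → 1 ≤ τ j)
    (Ω : Finset ℕ) (hΩsub : Ω ⊆ Finset.Icc 1 n) (hΩne : Ω.Nonempty)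
    (hdiff : ∀ j ∈ Finset.Icc 1 n, (j ∈ Ω ↔ σ j ≠ τ j))
    (ψ : ℝ) (hψ : ∀ i ∈ Ω, (σ i : ℝ) + 1 ≤ ψ ∧ (τ i : ℝ) + 1 ≤ ψ)
    (ε : ℝ) (hε : 0 < ε)
    (hgrowth : 2 * ψ ^ (2 * Ω.card) ≤ (2 : ℝ) ^ (((n : ℝ) - 1) * ε)) :
    (volume (basicIntervalSeq τ n)).toReal ^ (1 + ε)
        ≤ (volume (basicIntervalSeq σ n)).toReal ∧
    (volume (basicIntervalSeq σ n)).toReal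
        ≤ (volume (basicIntervalSeq τ n)).toReal ^ (1 - ε) :=
  stmt_3_general n σ τ hσ hτ Ω hΩsub hdiff ψ hψ ε hε hgrowth
end

section
/- Let φ(n) be a non-decreasing sequence of positive reals with limsup_{n→∞} φ(n)/n = α < ∞. Then for every irrational x in (0,1) with lim_{n→∞} s_n(x)/φ(n) = 1 (where s_n(x) is the sum of the first n partial quotients), x lies in the set F_α = {x : s_n(x)/n ≤ α' for all n} for some α' > α; consequently E_{φ(n)} ⊆ ∪_{k} F_{α+k} up to modification of finitely many partial quotients, so dim_H E_{φ(n)} ≤ sup_{α'>α} dim_H F_{α'} < 1. -/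
open Filter MeasureTheory Set

/-- `s_n(x)`, the sum of the first `n` partial quotients. -/
noncomputable def cfS (x : ℝ) (n : ℕ) : ℕ := ∑ j ∈ Finset.Icc 1 n, cfA x j

/-- The level set `E_{φ(n)} = {x : lim s_n(x)/φ(n) = 1}` (irrationals in `(0,1)`). -/
noncomputable def levelSet (φ : ℕ → ℝ) : Set ℝ :=
  {x : ℝ | x ∈ Set.Ioo (0 : ℝ) 1 ∧ Irrational x ∧
    Tendsto (fun n => (cfS x n : ℝ) / φ n) atTop (nhds 1)}

/-- `F_α = {x : s_n(x)/n ≤ α for all n ≥ 1}` (irrationals in `(0,1)`). -/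
noncomputable def slowSet (α : ℝ) : Set ℝ :=
  {x : ℝ | x ∈ Set.Ioo (0 : ℝ) 1 ∧ Irrational x ∧
    ∀ n, 1 ≤ n → (cfS x n : ℝ) / n ≤ α}

/-!
If `s_n(x)/φ(n) → 1` and `limsup φ(n)/n = α`, then `s_n(x) ≤ β n` for all `n ≥ N(x)`,
with `β = max 1 (2(α + 1))` independent of `x`; the finitely many earlier ratios `s_n/n`
are bounded, which gives the first claim.

For the dimension, sort the points of `E_φ` by their first `N(x)` partial quotients `l`.
Replacing `l` by `N` ones moves such a point into `F_β`, and the reverse move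
`y ↦ [l; T^N y]` (with `T` the Gauss map) is Lipschitz on the cylinder of `N` ones: there
`T` expands distances by at most `4`, and prepending partial quotients `≥ 1` is
`1`-Lipschitz. So every piece has dimension at most `dim_H F_β < 1`, and there are
countably many pieces.
-/

def unitIrrationals : Set ℝ := {x | x ∈ Ioo 0 1 ∧ Irrational x}

lemma mapsTo_gaussMap : MapsTo gaussMap unitIrrationals unitIrrationals := by
  rintro x ⟨-, hirr⟩
  have hfract : Irrational (Int.fract x⁻¹) := by
    rw [Int.fract]; exact hirr.inv.sub_intCast _
  exact ⟨⟨(Int.fract_nonneg _).lt_of_ne' hfract.ne_zero, Int.fract_lt_one _⟩, hfract⟩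

lemma one_le_cfA {x : ℝ} (hx : x ∈ unitIrrationals) (n : ℕ) : 1 ≤ cfA x n := by
  obtain ⟨⟨h0, h1⟩, -⟩ := mapsTo_gaussMap.iterate (n - 1) hx
  exact Nat.le_floor (by exact_mod_cast ((one_lt_inv₀ h0).mpr h1).le)

lemma cfA_gaussMap (x : ℝ) (n : ℕ) : cfA (gaussMap x) (n + 1) = cfA x (n + 2) := by
  simp only [cfA, Nat.add_sub_cancel, show n + 2 - 1 = n + 1 by omega,
    Function.iterate_succ_apply]

lemma cfS_zero (x : ℝ) : cfS x 0 = 0 := rfl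

lemma cfS_succ (x : ℝ) (n : ℕ) : cfS x (n + 1) = cfS x n + cfA x (n + 1) :=
  Finset.sum_Icc_succ_top (by omega) _

lemma cfS_one_add (x : ℝ) (m : ℕ) : cfS x (1 + m) = cfA x 1 + cfS (gaussMap x) m := by
  induction m with
  | zero => rfl
  | succ m ih =>
    rw [← Nat.add_assoc, cfS_succ, ih, cfS_succ, cfA_gaussMap, Nat.add_assoc, Nat.add_comm 1 m]

/-- The point whose partial quotients are `a` followed by those of `y`. -/
noncomputable def cfCons (a : ℕ) (y : ℝ) : ℝ := ((a : ℝ) + y)⁻¹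

noncomputable def cfPrepend (l : List ℕ) (y : ℝ) : ℝ := l.foldr cfCons y

lemma gaussMap_cfCons (a : ℕ) {y : ℝ} (hy : y ∈ Ico 0 1) : gaussMap (cfCons a y) = y := by
  rw [gaussMap, cfCons, inv_inv, Int.fract_natCast_add, Int.fract_eq_self.mpr hy]

lemma cfA_cfCons_one (a : ℕ) {y : ℝ} (hy : y ∈ Ico 0 1) : cfA (cfCons a y) 1 = a := by
  rw [cfA, Nat.sub_self, Function.iterate_zero_apply, cfCons, inv_inv, add_comm,
    Nat.floor_add_natCast hy.1, Nat.floor_eq_zero.mpr hy.2, zero_add]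

lemma cfCons_cfA_one_gaussMap {x : ℝ} (hx : 0 < x) : cfCons (cfA x 1) (gaussMap x) = x := by
  rw [cfCons, cfA, Nat.sub_self, Function.iterate_zero_apply, gaussMap, Int.fract,
    ← Int.natCast_floor_eq_floor (inv_pos.mpr hx).le, Int.cast_natCast, add_sub_cancel, inv_inv]

lemma cfCons_mem {a : ℕ} (ha : 1 ≤ a) {y : ℝ} (hy : y ∈ unitIrrationals) :
    cfCons a y ∈ unitIrrationals := by
  obtain ⟨⟨hy0, -⟩, hirr⟩ := hy
  have hlt : 1 < (a : ℝ) + y := by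
    have : (1 : ℝ) ≤ a := by exact_mod_cast ha
    linarith
  exact ⟨⟨inv_pos.mpr (by linarith), inv_lt_one_of_one_lt₀ hlt⟩, (hirr.natCast_add a).inv⟩

lemma cfPrepend_append (l₁ l₂ : List ℕ) (y : ℝ) :
    cfPrepend (l₁ ++ l₂) y = cfPrepend l₁ (cfPrepend l₂ y) :=
  List.foldr_append

lemma cfPrepend_mem {l : List ℕ} (hl : ∀ a ∈ l, 1 ≤ a) {y : ℝ}
    (hy : y ∈ unitIrrationals) : cfPrepend l y ∈ unitIrrationals := by
  induction l with
  | nil => exact hy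
  | cons a t ih =>
    exact cfCons_mem (hl a List.mem_cons_self) (ih fun b hb => hl b (List.mem_cons_of_mem a hb))

lemma iterate_gaussMap_cfPrepend {l : List ℕ} (hl : ∀ a ∈ l, 1 ≤ a) {y : ℝ}
    (hy : y ∈ unitIrrationals) : gaussMap^[l.length] (cfPrepend l y) = y := by
  induction l with
  | nil => rfl
  | cons a t ih =>
    have ht : ∀ b ∈ t, 1 ≤ b := fun b hb => hl b (List.mem_cons_of_mem a hb)
    have hmem := cfPrepend_mem ht hy
    rw [List.length_cons, Function.iterate_succ_apply]
    exact (congrArg _ (gaussMap_cfCons a (Ioo_subset_Ico_self hmem.1))).trans (ih ht)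

lemma cfS_cfPrepend {l : List ℕ} (hl : ∀ a ∈ l, 1 ≤ a) {y : ℝ}
    (hy : y ∈ unitIrrationals) (m : ℕ) :
    cfS (cfPrepend l y) (l.length + m) = l.sum + cfS y m := by
  induction l with
  | nil => simp [cfPrepend]
  | cons a t ih =>
    have ht : ∀ b ∈ t, 1 ≤ b := fun b hb => hl b (List.mem_cons_of_mem a hb)
    have hmem := Ioo_subset_Ico_self (cfPrepend_mem ht hy).1
    show cfS (cfCons a (cfPrepend t y)) _ = _
    rw [List.length_cons, Nat.add_right_comm, Nat.add_comm, cfS_one_add, cfA_cfCons_one a hmem,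
      gaussMap_cfCons a hmem, ih ht, List.sum_cons, Nat.add_assoc]

lemma cfS_cfPrepend_of_le {l : List ℕ} (hl : ∀ a ∈ l, 1 ≤ a) {y : ℝ}
    (hy : y ∈ unitIrrationals) {n : ℕ} (hn : n ≤ l.length) :
    cfS (cfPrepend l y) n = (l.take n).sum := by
  have key := cfS_cfPrepend (l := l.take n) (fun a ha => hl a (List.mem_of_mem_take ha))
    (cfPrepend_mem (l := l.drop n) (fun a ha => hl a (List.mem_of_mem_drop ha)) hy) 0
  rwa [← cfPrepend_append, List.take_append_drop, List.length_take, min_eq_left hn,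
    Nat.add_zero, cfS_zero, Nat.add_zero] at key

lemma exists_cfPrepend_iterate_gaussMap_eq {x : ℝ} (hx : x ∈ unitIrrationals) (N : ℕ) :
    ∃ l : List ℕ, l.length = N ∧ (∀ a ∈ l, 1 ≤ a) ∧
      cfPrepend l (gaussMap^[N] x) = x := by
  induction N generalizing x with
  | zero => exact ⟨[], rfl, by simp, rfl⟩
  | succ N ih =>
    obtain ⟨l, hlen, hl, hx'⟩ := ih (mapsTo_gaussMap hx)
    refine ⟨cfA x 1 :: l, by simp [hlen], ?_, ?_⟩
    · simpa using ⟨one_le_cfA hx 1, hl⟩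
    · show cfCons _ (cfPrepend l (gaussMap^[N] (gaussMap x))) = x
      rw [hx', cfCons_cfA_one_gaussMap hx.1.1]

lemma mapsTo_cfCons (a : ℕ) : MapsTo (cfCons a) (Ici 0) (Ici 0) := fun _ hy =>
  mem_Ici.mpr (inv_nonneg.mpr (add_nonneg a.cast_nonneg hy))

lemma lipschitzOnWith_cfCons {a : ℕ} (ha : 1 ≤ a) : LipschitzOnWith 1 (cfCons a) (Ici 0) := by
  rw [lipschitzOnWith_iff_dist_le_mul]
  intro y (hy : 0 ≤ y) z (hz : 0 ≤ z)
  have ha' : (1 : ℝ) ≤ a := by exact_mod_cast ha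
  have hden : 1 ≤ ((a : ℝ) + y) * (a + z) := by nlinarith
  rw [Real.dist_eq, Real.dist_eq, cfCons, cfCons, inv_sub_inv (by linarith) (by linarith),
    abs_div, abs_of_pos (a := ((a : ℝ) + y) * (a + z)) (by linarith),
    show (a : ℝ) + z - (a + y) = -(y - z) by ring, abs_neg, NNReal.coe_one, one_mul]
  exact div_le_self (abs_nonneg _) hden

lemma mapsTo_cfPrepend (l : List ℕ) : MapsTo (cfPrepend l) (Ici 0) (Ici 0) := by
  induction l with
  | nil => exact mapsTo_id _
  | cons a t ih => exact (mapsTo_cfCons a).comp ih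

lemma lipschitzOnWith_cfPrepend {l : List ℕ} (hl : ∀ a ∈ l, 1 ≤ a) :
    LipschitzOnWith 1 (cfPrepend l) (Ici 0) := by
  induction l with
  | nil => exact LipschitzWith.id.lipschitzOnWith
  | cons a t ih =>
    have h := (lipschitzOnWith_cfCons (hl a List.mem_cons_self)).comp
      (ih fun b hb => hl b (List.mem_cons_of_mem a hb)) (mapsTo_cfPrepend t)
    rw [mul_one] at h
    exact h

lemma dist_le_four_mul_dist_cfCons_one {y z : ℝ} (hy : y ∈ Icc 0 1) (hz : z ∈ Icc 0 1) :
    dist y z ≤ 4 * dist (cfCons 1 y) (cfCons 1 z) := by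
  obtain ⟨hy0, hy1⟩ := hy
  obtain ⟨hz0, hz1⟩ := hz
  have hpos : 0 < ((1 : ℝ) + y) * (1 + z) := by nlinarith
  have hden : ((1 : ℝ) + y) * (1 + z) ≤ 4 := by nlinarith
  rw [Real.dist_eq, Real.dist_eq, cfCons, Nat.cast_one, cfCons, Nat.cast_one,
    inv_sub_inv (by linarith) (by linarith), abs_div, abs_of_pos hpos,
    show (1 : ℝ) + z - (1 + y) = -(y - z) by ring, abs_neg, mul_div_assoc', le_div_iff₀ hpos]
  nlinarith [abs_nonneg (y - z)]

def onesCylinder (N : ℕ) : Set ℝ := cfPrepend (List.replicate N 1) '' unitIrrationals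

lemma iterate_gaussMap_cfPrepend_replicate (N : ℕ) {y : ℝ} (hy : y ∈ unitIrrationals) :
    gaussMap^[N] (cfPrepend (List.replicate N 1) y) = y := by
  simpa using iterate_gaussMap_cfPrepend (l := List.replicate N 1) (by simp) hy

lemma lipschitzOnWith_iterate_gaussMap_onesCylinder (N : ℕ) :
    LipschitzOnWith (4 ^ N) (gaussMap^[N]) (onesCylinder N) := by
  rw [lipschitzOnWith_iff_dist_le_mul]
  rintro _ ⟨y, hy, rfl⟩ _ ⟨z, hz, rfl⟩
  rw [iterate_gaussMap_cfPrepend_replicate N hy, iterate_gaussMap_cfPrepend_replicate N hz]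
  push_cast
  induction N with
  | zero => simp [cfPrepend]
  | succ N ih =>
    have hmem : ∀ {w}, w ∈ unitIrrationals → cfPrepend (List.replicate N 1) w ∈ Icc 0 1 :=
      fun hw => Ioo_subset_Icc_self (cfPrepend_mem (by simp) hw).1
    calc dist y z ≤ 4 ^ N * dist (cfPrepend (List.replicate N 1) y)
          (cfPrepend (List.replicate N 1) z) := ih
      _ ≤ 4 ^ N * (4 * dist (cfPrepend (List.replicate (N + 1) 1) y)
          (cfPrepend (List.replicate (N + 1) 1) z)) :=
        mul_le_mul_of_nonneg_left (dist_le_four_mul_dist_cfCons_one (hmem hy) (hmem hz))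
          (by positivity)
      _ = _ := by ring

/-- The equation `cfPrepend l (T^N x) = x` says that the first `N = l.length` partial
quotients of `x` are `l`. -/
def slowAfterPrefix (β : ℝ) (l : List ℕ) : Set ℝ :=
  {x | x ∈ unitIrrationals ∧ cfPrepend l (gaussMap^[l.length] x) = x ∧
    ∀ n, l.length ≤ n → (cfS x n : ℝ) ≤ β * n}

/-- Replacing the prefix `l` by ones makes `s_n = n` for `n ≤ l.length` and lowers every later
`s_n` by `l.sum - l.length ≥ 0`. -/
lemma cfPrepend_replicate_mem_slowSet {β : ℝ} (hβ : 1 ≤ β) {l : List ℕ}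
    (hl : ∀ a ∈ l, 1 ≤ a) {x : ℝ} (hx : x ∈ slowAfterPrefix β l) :
    cfPrepend (List.replicate l.length 1) (gaussMap^[l.length] x) ∈ slowSet β := by
  obtain ⟨hxI, hx_eq, hx_le⟩ := hx
  have hy := mapsTo_gaussMap.iterate l.length hxI
  have hones : ∀ a ∈ List.replicate l.length 1, 1 ≤ a := by simp
  obtain ⟨hIoo, hirr⟩ := cfPrepend_mem hones hy
  refine ⟨hIoo, hirr, fun n hn => (div_le_iff₀ (by exact_mod_cast hn)).mpr ?_⟩
  rcases le_or_gt n l.length with hn_le | hn_gt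
  · rw [cfS_cfPrepend_of_le hones hy (by simpa using hn_le), List.take_replicate,
      List.sum_replicate, min_eq_left hn_le, smul_eq_mul, mul_one]
    exact le_mul_of_one_le_left n.cast_nonneg hβ
  · obtain ⟨m, rfl⟩ : ∃ m, n = l.length + m := ⟨n - l.length, by omega⟩
    have hx_cfS := cfS_cfPrepend hl hy m
    rw [hx_eq] at hx_cfS
    have hsum : l.length ≤ l.sum := List.length_le_sum_of_one_le l hl
    have hones_cfS := cfS_cfPrepend hones hy m
    rw [List.length_replicate, List.sum_replicate, smul_eq_mul, mul_one] at hones_cfS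
    have hle : cfS (cfPrepend (List.replicate l.length 1) (gaussMap^[l.length] x))
        (l.length + m) ≤ cfS x (l.length + m) := by
      omega
    exact (Nat.cast_le.mpr hle).trans (hx_le _ le_self_add)

lemma dimH_slowAfterPrefix_le {β : ℝ} (hβ : 1 ≤ β) {l : List ℕ}
    (hl : ∀ a ∈ l, 1 ≤ a) :
    dimH (slowAfterPrefix β l) ≤ dimH (slowSet β) := by
  set N := l.length
  have hsub : slowAfterPrefix β l ⊆
      (cfPrepend l ∘ gaussMap^[N]) '' (slowSet β ∩ onesCylinder N) := by
    intro x hx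
    have hy := mapsTo_gaussMap.iterate N hx.1
    refine ⟨_, ⟨cfPrepend_replicate_mem_slowSet hβ hl hx, mem_image_of_mem _ hy⟩, ?_⟩
    rw [Function.comp_apply, iterate_gaussMap_cfPrepend_replicate N hy, hx.2.1]
  have hmaps : MapsTo (gaussMap^[N]) (onesCylinder N) (Ici 0) := by
    rintro _ ⟨y, hy, rfl⟩
    exact (iterate_gaussMap_cfPrepend_replicate N hy).symm ▸ hy.1.1.le
  have hlip := (lipschitzOnWith_cfPrepend hl).comp
    (lipschitzOnWith_iterate_gaussMap_onesCylinder N) hmaps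
  calc dimH (slowAfterPrefix β l)
      ≤ dimH ((cfPrepend l ∘ gaussMap^[N]) '' (slowSet β ∩ onesCylinder N)) := dimH_mono hsub
    _ ≤ dimH (slowSet β ∩ onesCylinder N) := (hlip.mono inter_subset_right).dimH_image_le
    _ ≤ dimH (slowSet β) := dimH_mono inter_subset_left

lemma mem_iUnion_slowAfterPrefix {β : ℝ} {x : ℝ} (hx : x ∈ unitIrrationals)
    (hβ : ∀ᶠ n in atTop, (cfS x n : ℝ) ≤ β * n) :
    x ∈ ⋃ (l : List ℕ) (_ : ∀ a ∈ l, 1 ≤ a), slowAfterPrefix β l := by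
  obtain ⟨N, hN⟩ := eventually_atTop.mp hβ
  obtain ⟨l, rfl, hl, hx_eq⟩ := exists_cfPrepend_iterate_gaussMap_eq hx N
  exact mem_iUnion₂.mpr ⟨l, hl, hx, hx_eq, hN⟩

lemma exists_gt_mem_slowSet {β : ℝ} {x : ℝ} (hx : x ∈ unitIrrationals)
    (hβ : ∀ᶠ n in atTop, (cfS x n : ℝ) ≤ β * n) (γ : ℝ) :
    ∃ α' > γ, x ∈ slowSet α' := by
  have hbdd : IsBoundedUnder (· ≤ ·) atTop fun n => (cfS x n : ℝ) / n :=
    ⟨β, eventually_map.mpr <| (hβ.and (eventually_ge_atTop 1)).mono fun n ⟨hn, h1⟩ =>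
      (div_le_iff₀ (by exact_mod_cast h1)).mpr hn⟩
  obtain ⟨C, hC⟩ := hbdd.bddAbove_range
  exact ⟨max C (γ + 1), (lt_add_one γ).trans_le (le_max_right _ _), hx.1, hx.2,
    fun n _ => (hC (mem_range_self n)).trans (le_max_left _ _)⟩

lemma eventually_cfS_le_of_mem_levelSet {φ : ℕ → ℝ} (hpos : ∀ n, 0 < φ n) {α : ℝ}
    (hα : limsup (fun n => ((φ n / n : ℝ) : EReal)) atTop = (α : EReal)) {x : ℝ}
    (hx : x ∈ levelSet φ) : ∀ᶠ n in atTop, (cfS x n : ℝ) ≤ 2 * (α + 1) * n := by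
  have hφ : ∀ᶠ n in atTop, ((φ n / n : ℝ) : EReal) < ((α + 1 : ℝ) : EReal) :=
    eventually_lt_of_limsup_lt (by rw [hα]; exact_mod_cast lt_add_one α) (by isBoundedDefault)
  have hs : ∀ᶠ n in atTop, (cfS x n : ℝ) / φ n < 2 :=
    hx.2.2.eventually_lt_const (by norm_num)
  filter_upwards [hφ, hs, eventually_ge_atTop 1] with n hφn hsn hn
  have hn' : (0 : ℝ) < n := by exact_mod_cast hn
  have hφn' : φ n < (α + 1) * n := (div_lt_iff₀ hn').mp (by exact_mod_cast hφn)
  have hsn' : (cfS x n : ℝ) < 2 * φ n := (div_lt_iff₀ (hpos n)).mp hsn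
  linarith

theorem stmt_5_general (φ : ℕ → ℝ) (hpos : ∀ n, 0 < φ n) (α : ℝ)
    (hα : Filter.limsup (fun n => ((φ n / n : ℝ) : EReal)) atTop = (α : EReal))
    (hCV : ∀ α' : ℝ, dimH (slowSet α') < 1) :
    (∀ x ∈ levelSet φ, ∃ α' > α, x ∈ slowSet α') ∧ dimH (levelSet φ) < 1 := by
  set β := max 1 (2 * (α + 1))
  have hbound : ∀ x ∈ levelSet φ, ∀ᶠ n in atTop, (cfS x n : ℝ) ≤ β * n := fun x hx =>
    (eventually_cfS_le_of_mem_levelSet hpos hα hx).mono fun n hn =>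
      hn.trans (mul_le_mul_of_nonneg_right (le_max_right _ _) n.cast_nonneg)
  refine ⟨fun x hx => exists_gt_mem_slowSet ⟨hx.1, hx.2.1⟩ (hbound x hx) α, ?_⟩
  have hcover :
      levelSet φ ⊆ ⋃ (l : List ℕ) (_ : ∀ a ∈ l, 1 ≤ a), slowAfterPrefix β l :=
    fun x hx => mem_iUnion_slowAfterPrefix ⟨hx.1, hx.2.1⟩ (hbound x hx)
  calc dimH (levelSet φ)
      ≤ ⨆ (l : List ℕ) (_ : ∀ a ∈ l, 1 ≤ a), dimH (slowAfterPrefix β l) := by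
        simpa only [dimH_iUnion] using dimH_mono hcover
    _ ≤ dimH (slowSet β) := iSup₂_le fun _ hl => dimH_slowAfterPrefix_le (le_max_left _ _) hl
    _ < 1 := hCV β

theorem stmt_5 (φ : ℕ → ℝ) (hpos : ∀ n, 0 < φ n) (hmono : Monotone φ) (α : ℝ)
    (hα : Filter.limsup (fun n => ((φ n / n : ℝ) : EReal)) atTop = (α : EReal))
    (hCV : ∀ α' : ℝ, dimH (slowSet α') < 1) :
    (∀ x ∈ levelSet φ, ∃ α' > α, x ∈ slowSet α') ∧ dimH (levelSet φ) < 1 :=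
  stmt_5_general φ hpos α hα hCV
end

section
/- If φ(n) is a non-decreasing sequence of positive reals such that dim_H E_{φ(n)} = 1, where E_{φ(n)} = {x in (0,1)\Q : lim_{n→∞} s_n(x)/φ(n) = 1}, then liminf_{n→∞} (log φ(n))/n = 0. -/
open Filter MeasureTheory Set

/-!
If `liminf log φ(n) / n > 0`, then `φ(n) ≥ Bⁿ` eventually for some `B > 1`. For `x` in the level
set, `s_n(x) ~ φ(n)`; if `a_n(x) < Cⁿ` eventually for some `1 < C < B`, the partial sums would be
`O(Cⁿ)`, which is incompatible with `s_n(x) ≥ Bⁿ / 2`. So the level set lies in the Wang–Wu set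
`{a_n(x) ≥ Cⁿ infinitely often}`, of dimension `< 1`. The liminf is `≥ 0` because `φ` is bounded
below by `φ(0) > 0`.
-/

open Asymptotics Finset

theorem zero_le_liminf_div_natCast {f : ℕ → ℝ} {c : ℝ} (hf : ∀ n, c ≤ f n) :
    0 ≤ liminf (fun n => ((f n / n : ℝ) : EReal)) atTop := by
  have hc : Tendsto (fun n : ℕ => ((c / n : ℝ) : EReal)) atTop (nhds ((0 : ℝ) : EReal)) :=
    EReal.tendsto_coe.mpr (tendsto_const_div_atTop_nhds_zero_nat c)
  rw [← EReal.coe_zero, ← hc.liminf_eq]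
  exact liminf_le_liminf (Eventually.of_forall fun n =>
    EReal.coe_le_coe_iff.mpr (div_le_div_of_nonneg_right (hf n) n.cast_nonneg))

theorem exists_one_lt_pow_le_of_liminf_log_div_pos {φ : ℕ → ℝ} (hpos : ∀ n, 0 < φ n)
    (h : 0 < liminf (fun n => ((Real.log (φ n) / n : ℝ) : EReal)) atTop) :
    ∃ B, 1 < B ∧ ∀ᶠ n in atTop, B ^ n ≤ φ n := by
  obtain ⟨r, hr, hrlim⟩ := EReal.exists_between_coe_real h
  refine ⟨Real.exp r, Real.one_lt_exp_iff.mpr (EReal.coe_pos.mp hr), ?_⟩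
  filter_upwards [eventually_lt_of_lt_liminf hrlim, eventually_ge_atTop 1] with n hn hn1
  have hrn : r * n ≤ Real.log (φ n) :=
    ((lt_div_iff₀ (by exact_mod_cast hn1)).mp (EReal.coe_lt_coe_iff.mp hn)).le
  calc Real.exp r ^ n = Real.exp (r * n) := by rw [← Real.exp_nat_mul, mul_comm]
    _ ≤ Real.exp (Real.log (φ n)) := Real.exp_le_exp.mpr hrn
    _ = φ n := Real.exp_log (hpos n)

theorem exists_le_mul_pow_of_eventually_le {a : ℕ → ℝ} {C : ℝ} (hC : 1 ≤ C)
    (ha : ∀ᶠ j in atTop, a j ≤ C ^ j) : ∃ K, 0 ≤ K ∧ ∀ j, a j ≤ K * C ^ j := by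
  obtain ⟨N, hN⟩ := eventually_atTop.mp ha
  set K := 1 + ∑ i ∈ range N, |a i|
  have hK : 1 ≤ K := le_add_of_nonneg_right (sum_nonneg fun i _ => abs_nonneg (a i))
  refine ⟨K, by linarith, fun j => ?_⟩
  have hCj : 1 ≤ C ^ j := one_le_pow₀ hC
  rcases lt_or_ge j N with hj | hj
  · calc a j ≤ |a j| := le_abs_self _
      _ ≤ ∑ i ∈ range N, |a i| := single_le_sum (fun i _ => abs_nonneg (a i)) (mem_range.2 hj)
      _ ≤ K * 1 := by linarith
      _ ≤ K * C ^ j := by gcongr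
  · nlinarith [hN j hj]

theorem isBigO_sum_Icc_of_eventually_le_pow {a : ℕ → ℝ} {C : ℝ} (hC : 1 < C)
    (ha₀ : ∀ j, 0 ≤ a j) (ha : ∀ᶠ j in atTop, a j ≤ C ^ j) :
    (fun n => ∑ j ∈ Icc 1 n, a j) =O[atTop] (C ^ ·) := by
  obtain ⟨K, hK, haK⟩ := exists_le_mul_pow_of_eventually_le hC.le ha
  have hC₁ : 0 < C - 1 := sub_pos.mpr hC
  refine IsBigO.of_bound (K * C / (C - 1)) (Eventually.of_forall fun n => ?_)
  rw [Real.norm_of_nonneg (sum_nonneg fun j _ => ha₀ j),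
    Real.norm_of_nonneg (pow_nonneg (by linarith) n)]
  calc ∑ j ∈ Icc 1 n, a j ≤ ∑ j ∈ Icc 1 n, K * C ^ j := sum_le_sum fun j _ => haK j
    _ ≤ ∑ j ∈ range (n + 1), K * C ^ j :=
      sum_le_sum_of_subset_of_nonneg
        (fun j hj => mem_range.2 (Nat.lt_succ_of_le (mem_Icc.1 hj).2))
        (fun j _ _ => by positivity)
    _ = K * ((C ^ (n + 1) - 1) / (C - 1)) := by rw [← mul_sum, geom_sum_eq hC.ne']
    _ ≤ K * C / (C - 1) * C ^ n := by
      rw [mul_div_assoc, mul_assoc, div_mul_eq_mul_div, ← pow_succ']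
      gcongr
      linarith

theorem frequently_pow_le_of_tendsto_sum_div {a φ : ℕ → ℝ} {B C : ℝ} (ha₀ : ∀ j, 0 ≤ a j)
    (hC : 1 < C) (hCB : C < B) (hφ : ∀ᶠ n in atTop, B ^ n ≤ φ n)
    (ha : Tendsto (fun n => (∑ j ∈ Icc 1 n, a j) / φ n) atTop (nhds 1)) :
    ∃ᶠ n in atTop, C ^ n ≤ a n := by
  by_contra! hsmall
  have hsum := isBigO_sum_Icc_of_eventually_le_pow hC ha₀ (hsmall.mono fun _ h => h.le)
  have hφsum : φ =O[atTop] fun n => ∑ j ∈ Icc 1 n, a j :=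
    (isEquivalent_of_tendsto_one ha).isBigO_symm
  have hBφ : (B ^ ·) =O[atTop] φ := IsBigO.of_bound 1 <| hφ.mono fun n hn => by
    rw [Real.norm_of_nonneg (pow_nonneg (by linarith) n), one_mul]
    exact hn.trans (le_abs_self _)
  refine (isLittleO_pow_pow_of_lt_left (by linarith) hCB).not_isBigO ?_
    (hBφ.trans (hφsum.trans hsum))
  exact Eventually.frequently (Eventually.of_forall fun n => pow_ne_zero n (by linarith))

theorem stmt_7_general (φ : ℕ → ℝ) (hpos : ∀ n, 0 < φ n) (hmono : Monotone φ)
    -- Wang–Wu: the set of `x` with `a_n(x) ≥ B^n` infinitely often has dimension `< 1`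
    (hWW : ∀ B : ℝ, 1 < B →
      dimH {x : ℝ | x ∈ Set.Ioo (0 : ℝ) 1 ∧ Irrational x ∧
        ∃ᶠ n in atTop, B ^ n ≤ (cfA x n : ℝ)} < 1)
    (hdim : dimH (levelSet φ) = 1) :
    Filter.liminf (fun n => ((Real.log (φ n) / n : ℝ) : EReal)) atTop = (0 : EReal) := by
  refine le_antisymm ?_
    (zero_le_liminf_div_natCast fun n => Real.log_le_log (hpos 0) (hmono n.zero_le))
  by_contra! hlim
  obtain ⟨B, hB, hφB⟩ := exists_one_lt_pow_le_of_liminf_log_div_pos hpos hlim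
  have hC : 1 < (1 + B) / 2 := by linarith
  have hsub : levelSet φ ⊆ {x : ℝ | x ∈ Set.Ioo (0 : ℝ) 1 ∧ Irrational x ∧
      ∃ᶠ n in atTop, ((1 + B) / 2) ^ n ≤ (cfA x n : ℝ)} := by
    rintro x ⟨hx01, hxirr, hx⟩
    refine ⟨hx01, hxirr, frequently_pow_le_of_tendsto_sum_div (fun j => (cfA x j).cast_nonneg)
      hC (by linarith) hφB ?_⟩
    simpa only [cfS, Nat.cast_sum] using hx
  exact (hdim ▸ dimH_mono hsub).not_gt (hWW _ hC)

theorem stmt_7 (φ : ℕ → ℝ) (hpos : ∀ n, 0 < φ n) (hmono : Monotone φ)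
    -- Wang–Wu: the set of `x` with `a_n(x) ≥ B^n` infinitely often has dimension `< 1`
    (hWW : ∀ B : ℝ, 1 < B →
      dimH {x : ℝ | x ∈ Set.Ioo (0 : ℝ) 1 ∧ Irrational x ∧
        ∃ᶠ n in atTop, B ^ n ≤ (cfA x n : ℝ)} < 1)
    -- Fan–Liao–Wang–Wu: sets with `s_n ≤ a_n(x) ≤ N s_n`, `s_n → ∞`, have dimension `≤ 1/2`
    (hFLWW : ∀ s : ℕ → ℕ, (∀ n, 3 ≤ s n) → Tendsto s atTop atTop → ∀ N : ℕ, 2 ≤ N →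
      dimH {x : ℝ | x ∈ Set.Ioo (0 : ℝ) 1 ∧ Irrational x ∧
        ∀ n, 1 ≤ n → s n ≤ cfA x n ∧ cfA x n ≤ N * s n} ≤ 1 / 2)
    (hdim : dimH (levelSet φ) = 1) :
    Filter.liminf (fun n => ((Real.log (φ n) / n : ℝ) : EReal)) atTop = (0 : EReal) :=
  stmt_7_general φ hpos hmono hWW hdim
end

section
/- Let B > 1 and suppose x is an irrational in (0,1) such that a_i(x) ≤ B^i for all i ≥ 2 and s_n(x) > Σ_{k=1}^n B^k for all sufficiently large n. Then there are at most finitely many indices i with a_i(x) < (1/2) B^i; equivalently, there exists N* such that (1/2)B^i ≤ a_i(x) ≤ B^i for all i > N*. -/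
open Filter MeasureTheory Set

/-!
Since `a_k ≤ B^k` for `k ≥ 2`, the deficit `B^i - a_i` of a single term is at most the total
deficit `∑_{k=2}^i (B^k - a_k)`, and `s_i > ∑_{k=1}^i B^k` bounds that total by `a_1 - B`.
As `B^i → ∞`, a deficit of `B^i / 2` is eventually impossible.
-/

theorem pow_sub_lt_of_sum_pow_lt_sum {a : ℕ → ℝ} {B : ℝ} {i : ℕ} (hi : 2 ≤ i)
    (hle : ∀ k ∈ Finset.Ioc 1 i, a k ≤ B ^ k)
    (hlt : ∑ k ∈ Finset.Icc 1 i, B ^ k < ∑ k ∈ Finset.Icc 1 i, a k) :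
    B ^ i - a i < a 1 - B := by
  have hsplit (f : ℕ → ℝ) : ∑ k ∈ Finset.Icc 1 i, f k = f 1 + ∑ k ∈ Finset.Ioc 1 i, f k := by
    rw [Finset.Icc_eq_cons_Ioc (by omega), Finset.sum_cons]
  have hsingle : B ^ i - a i ≤ ∑ k ∈ Finset.Ioc 1 i, (B ^ k - a k) :=
    Finset.single_le_sum (f := fun k ↦ B ^ k - a k) (fun k hk ↦ sub_nonneg.mpr (hle k hk))
      (Finset.mem_Ioc.mpr ⟨by omega, le_rfl⟩)
  rw [Finset.sum_sub_distrib] at hsingle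
  rw [hsplit, hsplit, pow_one] at hlt
  linarith

theorem stmt_9_general (B : ℝ) (hB : 1 < B)
    (x : ℝ)
    (hupper : ∀ i, 2 ≤ i → (cfA x i : ℝ) ≤ B ^ i)
    (hsum : ∃ N, ∀ n, N ≤ n → (∑ k ∈ Finset.Icc 1 n, B ^ k) < (cfS x n : ℝ)) :
    ∃ Nstar : ℕ, ∀ i, Nstar < i → (1 / 2) * B ^ i ≤ (cfA x i : ℝ) ∧ (cfA x i : ℝ) ≤ B ^ i := by
  obtain ⟨N, hN⟩ := hsum
  obtain ⟨M, hM⟩ := eventually_atTop.mp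
    ((tendsto_pow_atTop_atTop_of_one_lt hB).eventually_ge_atTop (2 * ((cfA x 1 : ℝ) - B)))
  refine ⟨max 1 (max N M), fun i hi ↦ ⟨?_, hupper i (by omega)⟩⟩
  have hdeficit : B ^ i - cfA x i < cfA x 1 - B :=
    pow_sub_lt_of_sum_pow_lt_sum (by omega)
      (fun k hk ↦ hupper k (by simp only [Finset.mem_Ioc] at hk; omega))
      (by simpa [cfS] using hN i (by omega))
  linarith [hM i (by omega)]

theorem stmt_9 (B : ℝ) (hB : 1 < B)
    (x : ℝ) (hx : x ∈ Set.Ioo (0 : ℝ) 1) (hirr : Irrational x)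
    (hupper : ∀ i, 2 ≤ i → (cfA x i : ℝ) ≤ B ^ i)
    (hsum : ∃ N, ∀ n, N ≤ n → (∑ k ∈ Finset.Icc 1 n, B ^ k) < (cfS x n : ℝ)) :
    ∃ Nstar : ℕ, ∀ i, Nstar < i → (1 / 2) * B ^ i ≤ (cfA x i : ℝ) ∧ (cfA x i : ℝ) ≤ B ^ i :=
  stmt_9_general B hB x hupper hsum
end

section
/- For a non-decreasing sequence φ(n) with dim_H E_{φ(n)} = 1, where E_{φ(n)} = {x : lim s_n(x)/φ(n) = 1}, both limsup_{n→∞} φ(n)/n = ∞ and liminf_{n→∞} (log φ(n))/n = 0 hold. -/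
open Filter MeasureTheory Set

lemma cfS_mono (x : ℝ) : Monotone (cfS x) := fun _ _ hmn =>
  Finset.sum_le_sum_of_subset (Finset.Icc_subset_Icc le_rfl hmn)

lemma lipschitzOnWith_inv_Ici {a : ℝ} (ha : 0 < a) :
    LipschitzOnWith (Real.toNNReal (a ^ 2)⁻¹) (fun x : ℝ => x⁻¹) (Ici a) := by
  refine LipschitzOnWith.of_dist_le' fun x hx y hy => ?_
  have hx0 : 0 < x := ha.trans_le hx
  have hy0 : 0 < y := ha.trans_le hy
  rw [Real.dist_eq, Real.dist_eq, inv_sub_inv hx0.ne' hy0.ne', abs_div, abs_sub_comm,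
    abs_of_pos (mul_pos hx0 hy0), div_eq_inv_mul]
  gcongr
  nlinarith [mem_Ici.1 hx, mem_Ici.1 hy]

/-- `prependOne y = [0; 1, a₁(y), a₂(y), …]`: the inverse branch of the Gauss map on the
cylinder where the first partial quotient is `1`. -/
noncomputable def prependOne (y : ℝ) : ℝ := (1 + y)⁻¹

lemma prependOne_mem_Ioo {y : ℝ} (hy : y ∈ Ioo (0 : ℝ) 1) :
    prependOne y ∈ Ioo (2⁻¹ : ℝ) 1 := by
  obtain ⟨hy0, hy1⟩ := hy
  refine ⟨?_, inv_lt_one_of_one_lt₀ (by linarith)⟩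
  rw [prependOne, inv_lt_inv₀ two_pos (by linarith)]
  linarith

lemma mapsTo_prependOne : MapsTo prependOne (Ioo (0 : ℝ) 1) (Ioo 0 1) := fun _ hy =>
  Ioo_subset_Ioo_left (by norm_num) (prependOne_mem_Ioo hy)

lemma mapsTo_prependOne_irrational :
    MapsTo prependOne {y : ℝ | Irrational y} {y | Irrational y} :=
  fun y (hy : Irrational y) => by simpa [prependOne] using (hy.ratCast_add 1).inv

lemma gaussMap_prependOne {y : ℝ} (hy : y ∈ Ioo (0 : ℝ) 1) : gaussMap (prependOne y) = y := by
  rw [gaussMap, prependOne, inv_inv, add_comm, Int.fract_add_one,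
    Int.fract_eq_self.2 ⟨hy.1.le, hy.2⟩]

lemma cfA_prependOne_one {y : ℝ} (hy : y ∈ Ioo (0 : ℝ) 1) : cfA (prependOne y) 1 = 1 := by
  rw [cfA, Nat.sub_self, Function.iterate_zero_apply, prependOne, inv_inv,
    Nat.floor_eq_iff (by linarith [hy.1])]
  constructor <;> push_cast <;> linarith [hy.1, hy.2]

lemma cfA_prependOne_succ {y : ℝ} (hy : y ∈ Ioo (0 : ℝ) 1) {m : ℕ} (hm : 1 ≤ m) :
    cfA (prependOne y) (m + 1) = cfA y m := by
  obtain ⟨k, rfl⟩ := Nat.exists_eq_add_of_le' hm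
  simp only [cfA, Nat.add_sub_cancel, Function.iterate_succ_apply, gaussMap_prependOne hy]

lemma cfS_prependOne {y : ℝ} (hy : y ∈ Ioo (0 : ℝ) 1) (m : ℕ) :
    cfS (prependOne y) (m + 1) = cfS y m + 1 := by
  induction m with
  | zero => simp [cfS, cfA_prependOne_one hy]
  | succ k ih =>
    rw [cfS_succ, ih, cfA_prependOne_succ hy (Nat.le_add_left 1 k), cfS_succ]
    ring

lemma cfS_prependOne_iterate {y : ℝ} (hy : y ∈ Ioo (0 : ℝ) 1) (L m : ℕ) :
    cfS (prependOne^[L] y) m = cfS y (m - L) + min m L := by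
  induction L generalizing m with
  | zero => simp
  | succ L ih =>
    rw [Function.iterate_succ_apply']
    rcases m with _ | m
    · simp [cfS_zero]
    · rw [cfS_prependOne (mapsTo_prependOne.iterate L hy), ih, Nat.succ_sub_succ,
        Nat.succ_min_succ]
      omega

lemma dimH_le_dimH_image_prependOne {F : Set ℝ} (hF : F ⊆ Ioo 0 1) :
    dimH F ≤ dimH (prependOne '' F) := by
  have himage : prependOne '' F ⊆ Ici 2⁻¹ := by
    rintro _ ⟨y, hy, rfl⟩
    exact (prependOne_mem_Ioo (hF hy)).1.le
  have hlip : LipschitzOnWith (Real.toNNReal (2⁻¹ ^ 2)⁻¹) (fun z : ℝ => z⁻¹ - 1)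
      (prependOne '' F) := by
    refine LipschitzOnWith.of_dist_le_mul fun x hx y hy => ?_
    rw [dist_sub_right]
    exact (lipschitzOnWith_inv_Ici (by norm_num)).dist_le_mul x (himage hx) y (himage hy)
  calc dimH F = dimH ((fun z : ℝ => z⁻¹ - 1) '' (prependOne '' F)) := by
        simp [image_image, prependOne]
    _ ≤ dimH (prependOne '' F) := hlip.dimH_image_le

lemma dimH_le_dimH_image_prependOne_iterate {F : Set ℝ} (hF : F ⊆ Ioo 0 1) (L : ℕ) :
    dimH F ≤ dimH (prependOne^[L] '' F) := by
  induction L generalizing F with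
  | zero => simp
  | succ L ih =>
    rw [Function.iterate_succ, image_comp]
    exact (dimH_le_dimH_image_prependOne hF).trans
      (ih (mapsTo_prependOne.mono_left hF).image_subset)

def cfMeanLeFromSet (A : ℝ) (N : ℕ) : Set ℝ :=
  {x | x ∈ Ioo (0 : ℝ) 1 ∧ Irrational x ∧ ∀ n, N ≤ n → (cfS x n : ℝ) ≤ A * n}

def cfMeanLeSet (A : ℝ) : Set ℝ :=
  {x | x ∈ Ioo (0 : ℝ) 1 ∧ Irrational x ∧ ∀ n, 1 ≤ n → (cfS x n : ℝ) / n ≤ A}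

section MeanBounded

variable {A : ℝ} {N : ℕ} {x : ℝ}

lemma cfS_le_of_mem_cfMeanLeFromSet (hA : 0 ≤ A) (hx : x ∈ cfMeanLeFromSet A N) (n : ℕ) :
    (cfS x n : ℝ) ≤ A * (n + N) := by
  rcases le_total N n with hNn | hnN
  · nlinarith [hx.2.2 n hNn, (Nat.cast_nonneg N : (0 : ℝ) ≤ N)]
  · calc (cfS x n : ℝ) ≤ cfS x N := by exact_mod_cast cfS_mono x hnN
      _ ≤ A * N := hx.2.2 N le_rfl
      _ ≤ A * (n + N) := by nlinarith [(Nat.cast_nonneg n : (0 : ℝ) ≤ n)]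

lemma prependOne_iterate_mem_cfMeanLeSet (hA : 0 ≤ A) (hx : x ∈ cfMeanLeFromSet A N) :
    prependOne^[N] x ∈ cfMeanLeSet (A + 1) := by
  refine ⟨mapsTo_prependOne.iterate N hx.1, mapsTo_prependOne_irrational.iterate N hx.2.1,
    fun m hm => ?_⟩
  rw [div_le_iff₀ (by exact_mod_cast hm), cfS_prependOne_iterate hx.1]
  rcases le_total m N with hmN | hNm
  · rw [Nat.sub_eq_zero_of_le hmN, min_eq_left hmN, cfS_zero]
    push_cast
    nlinarith [(Nat.cast_nonneg m : (0 : ℝ) ≤ m)]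
  · obtain ⟨n, rfl⟩ := Nat.exists_eq_add_of_le hNm
    rw [Nat.add_sub_cancel_left, min_eq_right hNm]
    push_cast
    nlinarith [cfS_le_of_mem_cfMeanLeFromSet hA hx n, (Nat.cast_nonneg n : (0 : ℝ) ≤ n)]

lemma dimH_cfMeanLeFromSet_le (hA : 0 ≤ A) (N : ℕ) :
    dimH (cfMeanLeFromSet A N) ≤ dimH (cfMeanLeSet (A + 1)) :=
  calc dimH (cfMeanLeFromSet A N)
      ≤ dimH (prependOne^[N] '' cfMeanLeFromSet A N) :=
        dimH_le_dimH_image_prependOne_iterate (fun _ hx => hx.1) N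
    _ ≤ dimH (cfMeanLeSet (A + 1)) :=
        dimH_mono (image_subset_iff.2 fun _ hx => prependOne_iterate_mem_cfMeanLeSet hA hx)

end MeanBounded

section LevelSet

variable {φ : ℕ → ℝ}

lemma levelSet_subset_iUnion_cfMeanLeFromSet (hpos : ∀ n, 0 < φ n) {C : ℝ}
    (hφ : ∀ᶠ n in atTop, φ n ≤ C * n) : levelSet φ ⊆ ⋃ N, cfMeanLeFromSet (2 * C) N := by
  rintro x ⟨hx01, hxirr, hlim⟩
  obtain ⟨N, hN⟩ := eventually_atTop.1 ((hlim.eventually_lt_const one_lt_two).and hφ)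
  refine mem_iUnion.2 ⟨N, hx01, hxirr, fun n hn => ?_⟩
  obtain ⟨hs, hφn⟩ := hN n hn
  rw [div_lt_iff₀ (hpos n)] at hs
  linarith

lemma dimH_levelSet_le_of_le_mul (hpos : ∀ n, 0 < φ n) {C : ℝ} (hC : 0 ≤ C)
    (hφ : ∀ᶠ n in atTop, φ n ≤ C * n) :
    dimH (levelSet φ) ≤ dimH (cfMeanLeSet (2 * C + 1)) :=
  calc dimH (levelSet φ) ≤ dimH (⋃ N, cfMeanLeFromSet (2 * C) N) :=
        dimH_mono (levelSet_subset_iUnion_cfMeanLeFromSet hpos hφ)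
    _ = ⨆ N, dimH (cfMeanLeFromSet (2 * C) N) := dimH_iUnion _
    _ ≤ dimH (cfMeanLeSet (2 * C + 1)) := iSup_le (dimH_cfMeanLeFromSet_le (by positivity))

theorem limsup_div_eq_top_of_dimH_levelSet (hpos : ∀ n, 0 < φ n)
    (hCV : ∀ A, dimH (cfMeanLeSet A) < 1) (hdim : dimH (levelSet φ) = 1) :
    limsup (fun n => ((φ n / n : ℝ) : EReal)) atTop = ⊤ := by
  by_contra hne
  obtain ⟨C, hC, -⟩ := EReal.exists_between_coe_real (lt_top_iff_ne_top.2 hne)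
  have hφ : ∀ᶠ n : ℕ in atTop, φ n ≤ max C 0 * n := by
    filter_upwards [eventually_lt_of_limsup_lt hC, eventually_ge_atTop 1] with n hn hn1
    rw [← div_le_iff₀ (by exact_mod_cast hn1)]
    exact (EReal.coe_lt_coe_iff.1 hn).le.trans (le_max_left C 0)
  exact (hCV _).not_ge (hdim ▸ dimH_levelSet_le_of_le_mul hpos (le_max_right C 0) hφ)

end LevelSet

section Growth

variable {φ : ℕ → ℝ}

lemma liminf_log_div_nonneg (hpos : ∀ n, 0 < φ n) (hmono : Monotone φ) :
    0 ≤ liminf (fun n => ((Real.log (φ n) / n : ℝ) : EReal)) atTop := by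
  have hlim : Tendsto (fun n : ℕ => ((Real.log (φ 0) / n : ℝ) : EReal)) atTop (nhds 0) :=
    EReal.tendsto_coe.2 (tendsto_const_div_atTop_nhds_zero_nat _)
  rw [← hlim.liminf_eq]
  exact liminf_le_liminf (Eventually.of_forall fun n => EReal.coe_le_coe_iff.2 <|
    div_le_div_of_nonneg_right (Real.log_le_log (hpos 0) (hmono n.zero_le)) n.cast_nonneg)

lemma eventually_pow_le_mul_pow {B ρ δ : ℝ} (hB : 0 < B) (hBρ : B < ρ) (hδ : 0 < δ) :
    ∀ᶠ n : ℕ in atTop, B ^ n ≤ δ * ρ ^ n := by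
  have hratio := tendsto_pow_atTop_atTop_of_one_lt ((one_lt_div hB).2 hBρ)
  filter_upwards [hratio.eventually_ge_atTop δ⁻¹] with n hn
  rw [div_pow, le_div_iff₀ (pow_pos hB n), inv_mul_le_iff₀ hδ] at hn
  exact hn

lemma frequently_mul_le_succ_of_pow_le (hpos : ∀ n, 0 < φ n) {r ρ : ℝ} (hr : 0 < r)
    (hrρ : r < ρ) (hφ : ∀ᶠ n in atTop, ρ ^ n ≤ φ n) :
    ∃ᶠ n in atTop, r * φ n ≤ φ (n + 1) := by
  by_contra h
  simp only [not_frequently, not_le] at h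
  obtain ⟨M, hM⟩ := eventually_atTop.1 (h.and hφ)
  have hslow : ∀ k, φ (M + k) ≤ φ M * r ^ k := by
    intro k
    induction k with
    | zero => simp
    | succ k ih =>
      calc φ (M + (k + 1)) ≤ r * φ (M + k) := (hM (M + k) (Nat.le_add_right M k)).1.le
        _ ≤ r * (φ M * r ^ k) := by gcongr
        _ = φ M * r ^ (k + 1) := by ring
  have hρ : 0 < ρ := hr.trans hrρ
  obtain ⟨k, hk⟩ := eventually_atTop.1 <|
    eventually_pow_le_mul_pow hr hrρ (div_pos (pow_pos hρ M) (mul_pos two_pos (hpos M)))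
  have hfast : φ M * r ^ k ≤ ρ ^ (M + k) / 2 :=
    calc φ M * r ^ k ≤ φ M * (ρ ^ M / (2 * φ M) * ρ ^ k) := by
          gcongr
          · exact (hpos M).le
          · exact hk k le_rfl
      _ = ρ ^ (M + k) / 2 := by
          field_simp [(hpos M).ne']
          ring
  linarith [pow_pos hρ (M + k), hslow k, (hM (M + k) (Nat.le_add_right M k)).2]

end Growth

def cfLargeQuotientSet (B : ℝ) : Set ℝ :=
  {x | x ∈ Ioo (0 : ℝ) 1 ∧ Irrational x ∧ ∃ᶠ n in atTop, B ^ n ≤ (cfA x n : ℝ)}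

section LargeQuotients

variable {φ : ℕ → ℝ} {x : ℝ}

/-- Since `s_{n+1} / φ(n+1) → 1` and `s_n / φ(n+1) ≲ r⁻¹`, a jump `φ(n+1) ≥ r φ(n)` forces
`a_{n+1} = s_{n+1} - s_n` to carry a fixed proportion of `φ(n+1)`. -/
lemma eventually_mul_le_cfA_of_mem_levelSet (hpos : ∀ n, 0 < φ n) {r δ : ℝ} (hr : 0 < r)
    (hδ : δ < 1 - r⁻¹) (hx : x ∈ levelSet φ) :
    ∀ᶠ n in atTop, r * φ n ≤ φ (n + 1) → δ * φ (n + 1) ≤ cfA x (n + 1) := by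
  have hlim := hx.2.2
  have hgap : Tendsto (fun n => (cfS x (n + 1) : ℝ) / φ (n + 1) - r⁻¹ * ((cfS x n : ℝ) / φ n))
      atTop (nhds (1 - r⁻¹ * 1)) :=
    (hlim.comp (tendsto_add_atTop_nat 1)).sub (hlim.const_mul r⁻¹)
  rw [mul_one] at hgap
  filter_upwards [hgap.eventually_const_lt hδ] with n hn hjump
  set t := (cfS x n : ℝ) / φ n
  set u := (cfS x (n + 1) : ℝ) / φ (n + 1)
  have hs : (cfS x n : ℝ) ≤ t * (r⁻¹ * φ (n + 1)) := by
    calc (cfS x n : ℝ) = t * φ n := (div_mul_cancel₀ _ (hpos n).ne').symm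
      _ ≤ t * (r⁻¹ * φ (n + 1)) := by
        gcongr
        · exact div_nonneg (Nat.cast_nonneg _) (hpos n).le
        · rwa [le_inv_mul_iff₀ hr]
  have hs' : (cfS x (n + 1) : ℝ) = u * φ (n + 1) :=
    (div_mul_cancel₀ _ (hpos (n + 1)).ne').symm
  have ha : (cfA x (n + 1) : ℝ) = cfS x (n + 1) - cfS x n := by
    rw [cfS_succ]
    push_cast
    ring
  rw [ha]
  nlinarith [hpos (n + 1)]

lemma levelSet_subset_cfLargeQuotientSet (hpos : ∀ n, 0 < φ n) {B ρ : ℝ} (hB : 1 < B)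
    (hBρ : B < ρ) (hφ : ∀ᶠ n in atTop, ρ ^ n ≤ φ n) :
    levelSet φ ⊆ cfLargeQuotientSet B := by
  intro x hx
  refine ⟨hx.1, hx.2.1, ?_⟩
  have hB0 : 0 < B := one_pos.trans hB
  have hgap : 0 < 1 - B⁻¹ := sub_pos.2 (inv_lt_one_of_one_lt₀ hB)
  set δ := (1 - B⁻¹) / 2
  have hδ : 0 < δ := half_pos hgap
  have hquot := eventually_mul_le_cfA_of_mem_levelSet hpos hB0 (half_lt_self hgap) hx
  have hshift := tendsto_add_atTop_nat 1
  have hgrowth := hshift.eventually (eventually_pow_le_mul_pow hB0 hBρ hδ)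
  refine hshift.frequently <|
    ((frequently_mul_le_succ_of_pow_le hpos hB0 hBρ hφ).and_eventually
      (hquot.and (hgrowth.and (hshift.eventually hφ)))).mono ?_
  rintro n ⟨hjump, hquot_n, hgrowth_n, hφ_n⟩
  exact hgrowth_n.trans ((mul_le_mul_of_nonneg_left hφ_n hδ.le).trans (hquot_n hjump))

theorem liminf_log_div_eq_zero_of_dimH_levelSet (hpos : ∀ n, 0 < φ n) (hmono : Monotone φ)
    (hWW : ∀ B, 1 < B → dimH (cfLargeQuotientSet B) < 1) (hdim : dimH (levelSet φ) = 1) :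
    liminf (fun n => ((Real.log (φ n) / n : ℝ) : EReal)) atTop = 0 := by
  refine le_antisymm ?_ (liminf_log_div_nonneg hpos hmono)
  by_contra! hlt
  obtain ⟨c, hc0, hc⟩ := EReal.exists_between_coe_real hlt
  have hc0 : 0 < c := by exact_mod_cast hc0
  have hφ : ∀ᶠ n : ℕ in atTop, Real.exp c ^ n ≤ φ n := by
    filter_upwards [eventually_lt_of_lt_liminf hc, eventually_ge_atTop 1] with n hn hn1
    rw [← Real.exp_nat_mul, ← Real.le_log_iff_exp_le (hpos n), mul_comm,
      ← le_div_iff₀ (by exact_mod_cast hn1)]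
    exact (EReal.coe_lt_coe_iff.1 hn).le
  have hB : 1 < Real.exp (c / 2) := Real.one_lt_exp_iff.2 (by positivity)
  have hBρ : Real.exp (c / 2) < Real.exp c := Real.exp_lt_exp.2 (by linarith)
  exact (hWW _ hB).not_ge
    (hdim ▸ dimH_mono (levelSet_subset_cfLargeQuotientSet hpos hB hBρ hφ))

end LargeQuotients

theorem stmt_10_general (φ : ℕ → ℝ) (hpos : ∀ n, 0 < φ n) (hmono : Monotone φ)
    -- Cesaratto–Vallée: `dim_H {x : s_n(x)/n ≤ A for all n} < 1` for all finite `A`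
    (hCV : ∀ A : ℝ, dimH {x : ℝ | x ∈ Set.Ioo (0 : ℝ) 1 ∧ Irrational x ∧
      ∀ n, 1 ≤ n → (cfS x n : ℝ) / n ≤ A} < 1)
    -- Wang–Wu: the set of `x` with `a_n(x) ≥ B^n` infinitely often has dimension `< 1`
    (hWW : ∀ B : ℝ, 1 < B →
      dimH {x : ℝ | x ∈ Set.Ioo (0 : ℝ) 1 ∧ Irrational x ∧
        ∃ᶠ n in atTop, B ^ n ≤ (cfA x n : ℝ)} < 1)
    (hdim : dimH (levelSet φ) = 1) :
    Filter.limsup (fun n => ((φ n / n : ℝ) : EReal)) atTop = (⊤ : EReal) ∧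
    Filter.liminf (fun n => ((Real.log (φ n) / n : ℝ) : EReal)) atTop = (0 : EReal) :=
  ⟨limsup_div_eq_top_of_dimH_levelSet hpos hCV hdim,
    liminf_log_div_eq_zero_of_dimH_levelSet hpos hmono hWW hdim⟩

theorem stmt_10 (φ : ℕ → ℝ) (hpos : ∀ n, 0 < φ n) (hmono : Monotone φ)
    -- Cesaratto–Vallée: `dim_H {x : s_n(x)/n ≤ A for all n} < 1` for all finite `A`
    (hCV : ∀ A : ℝ, dimH {x : ℝ | x ∈ Set.Ioo (0 : ℝ) 1 ∧ Irrational x ∧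
      ∀ n, 1 ≤ n → (cfS x n : ℝ) / n ≤ A} < 1)
    -- Wang–Wu: the set of `x` with `a_n(x) ≥ B^n` infinitely often has dimension `< 1`
    (hWW : ∀ B : ℝ, 1 < B →
      dimH {x : ℝ | x ∈ Set.Ioo (0 : ℝ) 1 ∧ Irrational x ∧
        ∃ᶠ n in atTop, B ^ n ≤ (cfA x n : ℝ)} < 1)
    -- Fan–Liao–Wang–Wu: sets with `s_n ≤ a_n(x) ≤ N s_n`, `s_n → ∞`, have dimension `≤ 1/2`
    (hFLWW : ∀ s : ℕ → ℕ, (∀ n, 3 ≤ s n) → Tendsto s atTop atTop → ∀ N : ℕ, 2 ≤ N →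
      dimH {x : ℝ | x ∈ Set.Ioo (0 : ℝ) 1 ∧ Irrational x ∧
        ∀ n, 1 ≤ n → s n ≤ cfA x n ∧ cfA x n ≤ N * s n} ≤ 1 / 2)
    (hdim : dimH (levelSet φ) = 1) :
    Filter.limsup (fun n => ((φ n / n : ℝ) : EReal)) atTop = (⊤ : EReal) ∧
    Filter.liminf (fun n => ((Real.log (φ n) / n : ℝ) : EReal)) atTop = (0 : EReal) :=
  stmt_10_general φ hpos hmono hCV hWW hdim
end

section
/- For b, c > 1 and φ(n) = Σ_{k=1}^n c^{b^k}, the set E_{φ(n)} = {x in (0,1)\Q : lim_{n→∞} s_n(x)/φ(n) = 1} has Hausdorff dimension 1/(b+1). -/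
open Filter MeasureTheory Set

/-!
If `a_n(x) < c₀ ^ b ^ n` eventually for some `c₀ < c`, then `a_n = o(c ^ b ^ n)` and, summing
(Stolz–Cesàro), `s_n = o(φ n)`; so every point of the level set has `a_n ≥ c₀ ^ b ^ n` infinitely
often, and Łuczak's theorem gives the upper bound `1 / (b + 1)`.

Conversely, with `M_n = ⌈c ^ b ^ n⌉₊` and `t_n = 1 + 1 / log M_n`, every `x` with
`M_n ≤ a_n ≤ M_n t_n` has `a_n ~ c ^ b ^ n`, hence `s_n ~ φ n`. Since `log M_n ~ b ^ n log c`, the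
Liao–Rams formula gives this set dimension `1 / (2 + (b - 1))`; it is nonempty because it contains
the continued fraction `[0; M_1, M_2, …]`.
-/
open Asymptotics Finset Topology

lemma Finset.sum_Icc_one_eq_sum_range {M : Type*} [AddCommMonoid M] (f : ℕ → M) (n : ℕ) :
    ∑ i ∈ Icc 1 n, f i = ∑ i ∈ range n, f (i + 1) := by
  rw [range_eq_Ico, sum_Ico_add']
  rfl

lemma tendsto_sum_Icc_atTop {g : ℕ → ℝ} (hg : 0 ≤ g) (h : Tendsto g atTop atTop) :
    Tendsto (fun n => ∑ i ∈ Icc 1 n, g i) atTop atTop := by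
  refine tendsto_atTop_mono' _ ?_ h
  filter_upwards [eventually_ge_atTop 1] with n hn
  exact single_le_sum (fun i _ => hg i) (mem_Icc.mpr ⟨hn, le_rfl⟩)

namespace Asymptotics

theorem IsLittleO.sum_Icc {α : Type*} [NormedAddCommGroup α] {f : ℕ → α} {g : ℕ → ℝ}
    (h : f =o[atTop] g) (hg : 0 ≤ g) (hsum : Tendsto (fun n => ∑ i ∈ Icc 1 n, g i) atTop atTop) :
    (fun n => ∑ i ∈ Icc 1 n, f i) =o[atTop] fun n => ∑ i ∈ Icc 1 n, g i := by
  simp only [sum_Icc_one_eq_sum_range] at hsum ⊢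
  exact (h.comp_tendsto (tendsto_add_atTop_nat 1)).sum_range (fun i => hg (i + 1)) hsum

theorem IsEquivalent.sum_Icc {f g : ℕ → ℝ} (h : f ~[atTop] g) (hg : 0 ≤ g)
    (hsum : Tendsto (fun n => ∑ i ∈ Icc 1 n, g i) atTop atTop) :
    (fun n => ∑ i ∈ Icc 1 n, f i) ~[atTop] fun n => ∑ i ∈ Icc 1 n, g i := by
  refine IsLittleO.isEquivalent ((h.isLittleO.sum_Icc hg hsum).congr_left fun n => ?_)
  simp [sum_sub_distrib]

end Asymptotics

lemma tendsto_rpow_pow_atTop {b c : ℝ} (hb : 1 < b) (hc : 1 < c) :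
    Tendsto (fun n : ℕ => c ^ b ^ n) atTop atTop :=
  (tendsto_rpow_atTop_of_base_gt_one c hc).comp (tendsto_pow_atTop_atTop_of_one_lt hb)

lemma isLittleO_rpow_pow {b c₀ c : ℝ} (hb : 1 < b) (hc₀ : 0 < c₀) (hc₀c : c₀ < c) :
    (fun n : ℕ => c₀ ^ b ^ n) =o[atTop] fun n => c ^ b ^ n := by
  have hc : 0 < c := hc₀.trans hc₀c
  refine isLittleO_of_tendsto (fun n h => absurd h (Real.rpow_pos_of_pos hc _).ne') ?_
  refine ((tendsto_rpow_atTop_of_base_lt_one (c₀ / c) (by linarith [div_pos hc₀ hc])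
    ((div_lt_one hc).mpr hc₀c)).comp (tendsto_pow_atTop_atTop_of_one_lt hb)).congr fun n => ?_
  exact Real.div_rpow hc₀.le hc.le _

lemma tendsto_pow_succ_div_sum_Icc_pow {b : ℝ} (hb : 1 < b) :
    Tendsto (fun n : ℕ => b ^ (n + 1) / ∑ k ∈ Icc 1 n, b ^ k) atTop (𝓝 (b - 1)) := by
  have hb0 : 0 < b := by linarith
  have h : Tendsto (fun n : ℕ => (b - 1) / (1 - b⁻¹ ^ n)) atTop (𝓝 ((b - 1) / (1 - 0))) :=
    tendsto_const_nhds.div (tendsto_const_nhds.sub (tendsto_pow_atTop_nhds_zero_of_lt_one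
      (inv_nonneg.mpr hb0.le) (inv_lt_one_of_one_lt₀ hb))) (by norm_num)
  rw [sub_zero, div_one] at h
  refine h.congr' ?_
  filter_upwards [eventually_ge_atTop 1] with n hn
  have hbn : 1 < b ^ n := one_lt_pow₀ hb (by omega)
  rw [sum_Icc_one_eq_sum_range]
  simp only [pow_succ, ← sum_mul, geom_sum_eq hb.ne', inv_pow]
  field_simp

lemma tendsto_log_div_sum_Icc_log {b c : ℝ} (hb : 1 < b) (hc : 1 < c) {s : ℕ → ℝ}
    (hs : s ~[atTop] fun n => c ^ b ^ n) :
    Tendsto (fun n => Real.log (s (n + 1)) / ∑ k ∈ Icc 1 n, Real.log (s k)) atTop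
      (𝓝 (b - 1)) := by
  have hL : 0 < Real.log c := Real.log_pos hc
  have hlog : (fun n => Real.log (s n)) ~[atTop] fun n => Real.log c * b ^ n :=
    (hs.log (tendsto_rpow_pow_atTop hb hc)).congr_right (Eventually.of_forall fun n => by
      dsimp only
      rw [Real.log_rpow (by linarith), mul_comm])
  have hsum := hlog.sum_Icc (fun n => by positivity) (tendsto_sum_Icc_atTop (fun n => by positivity)
    ((tendsto_pow_atTop_atTop_of_one_lt hb).const_mul_atTop hL))
  refine ((hlog.comp_tendsto (tendsto_add_atTop_nat 1)).div hsum).tendsto_nhds_iff.mpr ?_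
  refine (tendsto_pow_succ_div_sum_Icc_pow hb).congr fun n => ?_
  simp only [Function.comp_apply, Pi.div_apply, ← mul_sum]
  rw [mul_div_mul_left _ _ hL.ne']

lemma tendsto_log_inv_log_div_log {s : ℕ → ℝ} (hs : Tendsto s atTop atTop) :
    Tendsto (fun n => Real.log ((1 + (Real.log (s n))⁻¹) - 1) / Real.log (s n)) atTop (𝓝 0) := by
  have h := (Real.isLittleO_log_id_atTop.tendsto_div_nhds_zero.comp
    (Real.tendsto_log_atTop.comp hs)).neg
  rw [neg_zero] at h
  refine h.congr fun n => ?_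
  simp [Real.log_inv, neg_div]

lemma gaussMap_one_div_natCast_add (a : ℕ) {y : ℝ} (hy : y ∈ Set.Ico 0 1) :
    gaussMap (1 / (a + y)) = y := by
  rw [gaussMap, one_div, inv_inv, add_comm, Int.fract_add_natCast, Int.fract_eq_self.mpr hy]

lemma floor_inv_one_div_natCast_add (a : ℕ) {y : ℝ} (hy : y ∈ Set.Ico 0 1) :
    ⌊(1 / (a + y))⁻¹⌋₊ = a := by
  rw [one_div, inv_inv, add_comm, Nat.floor_add_natCast hy.1, Nat.floor_eq_zero.mpr hy.2, zero_add]

lemma gaussMap_ratCast (q : ℚ) : gaussMap q = ((Int.fract q⁻¹ : ℚ) : ℝ) := by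
  rw [gaussMap, Rat.cast_fract, Rat.cast_inv]

-- The numerator strictly decreases along the Gauss orbit of a positive rational.
lemma not_forall_iterate_gaussMap_ratCast_pos (q : ℚ) : ¬ ∀ k, 0 < gaussMap^[k] (q : ℝ) := by
  induction h : q.num.toNat using Nat.strong_induction_on generalizing q with
  | _ n ih =>
    intro hpos
    have hq : 0 < q := Rat.cast_pos.mp (hpos 0)
    refine ih _ ?_ (Int.fract q⁻¹) rfl fun k => ?_
    · have hlt := Rat.fract_inv_num_lt_num_of_pos hq
      have hnn := Rat.num_nonneg.mpr (Int.fract_nonneg q⁻¹)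
      omega
    · simpa only [Function.iterate_succ_apply, gaussMap_ratCast] using hpos (k + 1)

lemma irrational_of_forall_iterate_gaussMap_pos {x : ℝ} (h : ∀ k, 0 < gaussMap^[k] x) :
    Irrational x := by
  rintro ⟨q, rfl⟩
  exact not_forall_iterate_gaussMap_ratCast_pos q h

/-- `cfTail m k j t = 1 / (m (k + 1) + 1 / (m (k + 2) + ⋯ + 1 / (m (k + j) + t)))`. -/
noncomputable def cfTail (m : ℕ → ℕ) (k : ℕ) : ℕ → ℝ → ℝ
  | 0, t => t
  | j + 1, t => cfTail m k j (1 / (m (k + j + 1) + t))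

/-- The value of the infinite continued fraction `[0; m (k + 1), m (k + 2), …]`. -/
noncomputable def cfValue (m : ℕ → ℕ) (k : ℕ) : ℝ :=
  limUnder atTop fun j => cfTail m k j (1 / 2)

lemma cfTail_succ' (m : ℕ → ℕ) (k j : ℕ) (t : ℝ) :
    cfTail m k (j + 1) t = 1 / (m (k + 1) + cfTail m (k + 1) j t) := by
  induction j generalizing t with
  | zero => rfl
  | succ j ih =>
    rw [cfTail, ih, cfTail, show k + (j + 1) + 1 = k + 1 + j + 1 by omega]

lemma cfTail_add (m : ℕ → ℕ) (k j i : ℕ) (t : ℝ) :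
    cfTail m k (j + i) t = cfTail m k j (cfTail m (k + j) i t) := by
  induction i generalizing t with
  | zero => rfl
  | succ i ih =>
    rw [← add_assoc, cfTail, ih, cfTail, show k + (j + i) + 1 = k + j + i + 1 by omega]

lemma one_div_add_mem_Icc {A t : ℝ} (hA : 1 ≤ A) (ht : t ∈ Set.Icc 0 1) :
    1 / (A + t) ∈ Set.Icc (0 : ℝ) 1 :=
  ⟨by have := ht.1; positivity, (div_le_one (by linarith [ht.1])).mpr (by linarith [ht.1])⟩

lemma abs_one_div_add_sub_one_div_add_le {A s t : ℝ} (hA : 2 ≤ A) (hs : s ∈ Set.Icc 0 1)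
    (ht : t ∈ Set.Icc 0 1) : |1 / (A + s) - 1 / (A + t)| ≤ 1 / 4 * |s - t| := by
  have hAs : 2 ≤ A + s := by linarith [hs.1]
  have hAt : 2 ≤ A + t := by linarith [ht.1]
  have hprod : 4 ≤ (A + s) * (A + t) := by nlinarith
  have heq : 1 / (A + s) - 1 / (A + t) = (t - s) / ((A + s) * (A + t)) := by
    field_simp
    ring
  have hpos : 0 < (A + s) * (A + t) := by linarith
  rw [heq, abs_div, abs_of_pos hpos, abs_sub_comm, div_le_iff₀ hpos]
  nlinarith [abs_nonneg (s - t)]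

section ContinuedFraction

variable {m : ℕ → ℕ} (hm : ∀ n, 2 ≤ m n)
include hm

lemma cfTail_mem_Icc (k j : ℕ) {t : ℝ} (ht : t ∈ Set.Icc 0 1) :
    cfTail m k j t ∈ Set.Icc (0 : ℝ) 1 := by
  induction j generalizing t with
  | zero => exact ht
  | succ j ih =>
    exact ih (one_div_add_mem_Icc (by exact_mod_cast one_le_two.trans (hm _)) ht)

lemma abs_cfTail_sub_le (k j : ℕ) {s t : ℝ} (hs : s ∈ Set.Icc 0 1) (ht : t ∈ Set.Icc 0 1) :
    |cfTail m k j s - cfTail m k j t| ≤ (1 / 4) ^ j * |s - t| := by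
  induction j generalizing s t with
  | zero => simp [cfTail]
  | succ j ih =>
    have hA : (2 : ℝ) ≤ m (k + j + 1) := by exact_mod_cast hm _
    calc |cfTail m k (j + 1) s - cfTail m k (j + 1) t|
        ≤ (1 / 4) ^ j * |1 / (m (k + j + 1) + s) - 1 / (m (k + j + 1) + t)| :=
          ih (one_div_add_mem_Icc (by linarith) hs) (one_div_add_mem_Icc (by linarith) ht)
      _ ≤ (1 / 4) ^ j * (1 / 4 * |s - t|) := by
          gcongr
          exact abs_one_div_add_sub_one_div_add_le hA hs ht
      _ = (1 / 4) ^ (j + 1) * |s - t| := by ring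

lemma cauchySeq_cfTail (k : ℕ) : CauchySeq fun j => cfTail m k j (1 / 2) := by
  have hhalf : (1 / 2 : ℝ) ∈ Set.Icc 0 1 := by norm_num
  refine cauchySeq_of_le_geometric (1 / 4) 1 (by norm_num) fun j => ?_
  have h1 := cfTail_mem_Icc hm (k + j) 1 hhalf
  rw [Real.dist_eq, cfTail_add m k j 1, one_mul]
  calc _ ≤ (1 / 4) ^ j * |1 / 2 - cfTail m (k + j) 1 (1 / 2)| :=
        abs_cfTail_sub_le hm k j hhalf h1
    _ ≤ (1 / 4) ^ j * 1 := by
        gcongr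
        rw [abs_le]
        constructor <;> linarith [h1.1, h1.2]
    _ = (1 / 4) ^ j := mul_one _

lemma tendsto_cfValue (k : ℕ) :
    Tendsto (fun j => cfTail m k j (1 / 2)) atTop (𝓝 (cfValue m k)) :=
  (cauchySeq_cfTail hm k).tendsto_limUnder

lemma cfValue_mem_Icc (k : ℕ) : cfValue m k ∈ Set.Icc (0 : ℝ) 1 :=
  isClosed_Icc.mem_of_tendsto (tendsto_cfValue hm k)
    (Eventually.of_forall fun j => cfTail_mem_Icc hm k j (by norm_num))

lemma cfValue_eq (k : ℕ) : cfValue m k = 1 / (m (k + 1) + cfValue m (k + 1)) := by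
  have hA : (2 : ℝ) ≤ m (k + 1) := by exact_mod_cast hm _
  refine tendsto_nhds_unique ((tendsto_cfValue hm k).comp (tendsto_add_atTop_nat 1)) ?_
  simp only [Function.comp_def, cfTail_succ']
  exact tendsto_const_nhds.div (tendsto_const_nhds.add (tendsto_cfValue hm (k + 1)))
    (by linarith [(cfValue_mem_Icc hm (k + 1)).1])

lemma cfValue_mem_Ioo (k : ℕ) : cfValue m k ∈ Set.Ioo (0 : ℝ) 1 := by
  have hA : (2 : ℝ) ≤ m (k + 1) := by exact_mod_cast hm _
  have h := (cfValue_mem_Icc hm (k + 1)).1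
  rw [cfValue_eq hm]
  exact ⟨by positivity, (div_lt_one (by linarith)).mpr (by linarith)⟩

lemma iterate_gaussMap_cfValue (k : ℕ) : gaussMap^[k] (cfValue m 0) = cfValue m k := by
  induction k with
  | zero => rfl
  | succ k ih =>
    rw [Function.iterate_succ_apply', ih, cfValue_eq hm k,
      gaussMap_one_div_natCast_add _ (Set.Ioo_subset_Ico_self (cfValue_mem_Ioo hm _))]

lemma cfA_cfValue (k : ℕ) : cfA (cfValue m 0) (k + 1) = m (k + 1) := by
  rw [cfA, Nat.add_sub_cancel, iterate_gaussMap_cfValue hm, cfValue_eq hm,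
    floor_inv_one_div_natCast_add _ (Set.Ioo_subset_Ico_self (cfValue_mem_Ioo hm _))]

theorem exists_cfA_eq : ∃ x ∈ Set.Ioo (0 : ℝ) 1, Irrational x ∧ ∀ n, 1 ≤ n → cfA x n = m n := by
  refine ⟨cfValue m 0, cfValue_mem_Ioo hm 0, irrational_of_forall_iterate_gaussMap_pos fun k => ?_,
    fun n hn => ?_⟩
  · rw [iterate_gaussMap_cfValue hm]
    exact (cfValue_mem_Ioo hm k).1
  · obtain ⟨k, rfl⟩ := Nat.exists_eq_add_of_le' hn
    exact cfA_cfValue hm k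

lemma nonempty_setOf_le_cfA_le_mul {t : ℕ → ℝ} (ht : ∀ n, 1 ≤ t n) :
    {x : ℝ | x ∈ Set.Ioo 0 1 ∧ Irrational x ∧
      ∀ n, 1 ≤ n → (m n : ℝ) ≤ (cfA x n : ℝ) ∧ (cfA x n : ℝ) ≤ m n * t n}.Nonempty := by
  obtain ⟨x, hx, hirr, hcf⟩ := exists_cfA_eq hm
  refine ⟨x, hx, hirr, fun n hn => ?_⟩
  rw [hcf n hn]
  exact ⟨le_rfl, le_mul_of_one_le_right (Nat.cast_nonneg _) (ht n)⟩

end ContinuedFraction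

lemma cfS_eq_sum (x : ℝ) (n : ℕ) : (cfS x n : ℝ) = ∑ j ∈ Icc 1 n, (cfA x j : ℝ) :=
  Nat.cast_sum _ _

section LevelSet

variable {ψ : ℕ → ℝ} (hψ : 0 ≤ ψ) (hsum : Tendsto (fun n => ∑ i ∈ Icc 1 n, ψ i) atTop atTop)
include hψ hsum

lemma not_isLittleO_cfA_of_mem_levelSet {x : ℝ}
    (hx : x ∈ levelSet fun n => ∑ i ∈ Icc 1 n, ψ i) :
    ¬ (fun n => (cfA x n : ℝ)) =o[atTop] ψ := fun h => by
  have h0 := (h.sum_Icc hψ hsum).tendsto_div_nhds_zero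
  simp only [← cfS_eq_sum] at h0
  exact zero_ne_one (tendsto_nhds_unique h0 hx.2.2)

lemma mem_levelSet_of_isEquivalent {x : ℝ} (hx : x ∈ Set.Ioo 0 1) (hirr : Irrational x)
    (h : (fun n => (cfA x n : ℝ)) ~[atTop] ψ) :
    x ∈ levelSet fun n => ∑ i ∈ Icc 1 n, ψ i := by
  refine ⟨hx, hirr, ?_⟩
  have h1 := (isEquivalent_iff_tendsto_one (hsum.eventually_ne_atTop 0)).mp (h.sum_Icc hψ hsum)
  simpa only [cfS_eq_sum, Pi.div_def] using h1

lemma setOf_le_cfA_le_mul_subset_levelSet {s t : ℕ → ℝ} (hs : s ~[atTop] ψ) (hs0 : ∀ n, 0 < s n)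
    (ht : Tendsto t atTop (𝓝 1)) :
    {x : ℝ | x ∈ Set.Ioo 0 1 ∧ Irrational x ∧
      ∀ n, 1 ≤ n → s n ≤ (cfA x n : ℝ) ∧ (cfA x n : ℝ) ≤ s n * t n} ⊆
    levelSet fun n => ∑ i ∈ Icc 1 n, ψ i := by
  rintro x ⟨hx, hirr, hbounds⟩
  refine mem_levelSet_of_isEquivalent hψ hsum hx hirr (IsEquivalent.trans ?_ hs)
  refine isEquivalent_of_tendsto_one (tendsto_of_tendsto_of_tendsto_of_le_of_le'
    tendsto_const_nhds ht ?_ ?_) <;>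
  filter_upwards [eventually_ge_atTop 1] with n hn
  · exact (one_le_div (hs0 n)).mpr (hbounds n hn).1
  · exact (div_le_iff₀' (hs0 n)).mpr (hbounds n hn).2

end LevelSet

lemma levelSet_subset_frequently_rpow_pow_le_cfA {b c₀ c : ℝ} (hb : 1 < b) (hc₀ : 0 < c₀)
    (hc₀c : c₀ < c) (hc : 1 < c) :
    levelSet (fun n => ∑ k ∈ Icc 1 n, c ^ b ^ k) ⊆
      {x : ℝ | x ∈ Set.Ioo 0 1 ∧ Irrational x ∧ ∃ᶠ n in atTop, c₀ ^ b ^ n ≤ (cfA x n : ℝ)} := by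
  intro x hx
  have hψ : 0 ≤ fun n : ℕ => c ^ b ^ n := fun n => by positivity
  refine ⟨hx.1, hx.2.1, fun hsmall => not_isLittleO_cfA_of_mem_levelSet hψ
    (tendsto_sum_Icc_atTop hψ (tendsto_rpow_pow_atTop hb hc)) hx ?_⟩
  refine IsBigO.trans_isLittleO (IsBigO.of_bound' ?_) (isLittleO_rpow_pow hb hc₀ hc₀c)
  filter_upwards [hsmall] with n hn
  rw [Real.norm_natCast, Real.norm_of_nonneg (by positivity)]
  exact (not_le.mp hn).le

theorem stmt_11_general (b c : ℝ) (hb : 1 < b) (hc : 1 < c)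
    -- Łuczak / Wang–Wu: `dim_H {x : a_n(x) ≥ c₀^{b^n} i.o.} = 1/(b+1)` for any `c₀ > 1`
    (hLuczak : ∀ c₀ : ℝ, 1 < c₀ →
      dimH {x : ℝ | x ∈ Set.Ioo (0 : ℝ) 1 ∧ Irrational x ∧
        ∃ᶠ n in atTop, c₀ ^ (b ^ n) ≤ (cfA x n : ℝ)} = ENNReal.ofReal (1 / (b + 1)))
    -- Liao–Rams generalization
    (hLR : ∀ s t : ℕ → ℝ, (∀ n, 1 ≤ s n) → (∀ n, 1 < t n) →
      {x : ℝ | x ∈ Set.Ioo (0 : ℝ) 1 ∧ Irrational x ∧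
        ∀ n, 1 ≤ n → s n ≤ (cfA x n : ℝ) ∧ (cfA x n : ℝ) ≤ s n * t n}.Nonempty →
      Tendsto s atTop atTop →
      Tendsto (fun n => Real.log (t n - 1) / Real.log (s n)) atTop (nhds 0) →
      dimH {x : ℝ | x ∈ Set.Ioo (0 : ℝ) 1 ∧ Irrational x ∧
          ∀ n, 1 ≤ n → s n ≤ (cfA x n : ℝ) ∧ (cfA x n : ℝ) ≤ s n * t n}
        = (ENNReal.ofReal (2 + Filter.limsup
            (fun n => Real.log (s (n + 1)) / ∑ k ∈ Finset.Icc 1 n, Real.log (s k)) atTop))⁻¹) :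
    dimH (levelSet (fun n => ∑ k ∈ Finset.Icc 1 n, c ^ (b ^ k)))
      = ENNReal.ofReal (1 / (b + 1)) := by
  have hψ : Tendsto (fun n : ℕ => c ^ b ^ n) atTop atTop := tendsto_rpow_pow_atTop hb hc
  set s : ℕ → ℝ := fun n => (⌈c ^ b ^ n⌉₊ : ℕ)
  set t : ℕ → ℝ := fun n => 1 + (Real.log (s n))⁻¹
  have hceil : ∀ n, 2 ≤ ⌈c ^ b ^ n⌉₊ := fun n =>
    Nat.lt_ceil.mpr (by exact_mod_cast Real.one_lt_rpow hc (by positivity))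
  have hs2 : ∀ n, 2 ≤ s n := fun n => Nat.ofNat_le_cast.mpr (hceil n)
  have hs : s ~[atTop] fun n => c ^ b ^ n := isEquivalent_nat_ceil.comp_tendsto hψ
  have hs_top : Tendsto s atTop atTop := hs.symm.tendsto_atTop hψ
  have ht : ∀ n, 1 < t n := fun n =>
    lt_add_of_pos_right 1 (inv_pos.mpr (Real.log_pos (by linarith [hs2 n])))
  have hdim := hLR s t (fun n => by linarith [hs2 n]) ht
    (nonempty_setOf_le_cfA_le_mul hceil fun n => (ht n).le) hs_top
    (tendsto_log_inv_log_div_log hs_top)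
  rw [(tendsto_log_div_sum_Icc_log hb hc hs).limsup_eq, show 2 + (b - 1) = b + 1 by ring,
    ← ENNReal.ofReal_inv_of_pos (by linarith), ← one_div] at hdim
  apply le_antisymm
  · rw [← hLuczak ((1 + c) / 2) (by linarith)]
    exact dimH_mono (levelSet_subset_frequently_rpow_pow_le_cfA hb (by linarith) (by linarith) hc)
  · rw [← hdim]
    refine dimH_mono (setOf_le_cfA_le_mul_subset_levelSet (fun n => by positivity)
      (tendsto_sum_Icc_atTop (fun n => by positivity) hψ) hs (fun n => by linarith [hs2 n]) ?_)
    simpa using ((Real.tendsto_log_atTop.comp hs_top).inv_tendsto_atTop).const_add 1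

theorem stmt_11 (b c : ℝ) (hb : 1 < b) (hc : 1 < c)
    -- Łuczak / Wang–Wu: `dim_H {x : a_n(x) ≥ c₀^{b^n} i.o.} = 1/(b+1)` for any `c₀ > 1`
    (hLuczak : ∀ c₀ : ℝ, 1 < c₀ →
      dimH {x : ℝ | x ∈ Set.Ioo (0 : ℝ) 1 ∧ Irrational x ∧
        ∃ᶠ n in atTop, c₀ ^ (b ^ n) ≤ (cfA x n : ℝ)} = ENNReal.ofReal (1 / (b + 1)))
    -- Fan–Liao–Wang–Wu lemma
    (hFLWW : ∀ s : ℕ → ℝ, (∀ n, 3 ≤ s n) → Tendsto s atTop atTop → ∀ N : ℝ, 2 ≤ N →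
      dimH {x : ℝ | x ∈ Set.Ioo (0 : ℝ) 1 ∧ Irrational x ∧
          ∀ n, 1 ≤ n → s n ≤ (cfA x n : ℝ) ∧ (cfA x n : ℝ) ≤ N * s n}
        = (ENNReal.ofReal (2 + Filter.limsup
            (fun n => Real.log (s (n + 1)) / ∑ k ∈ Finset.Icc 1 n, Real.log (s k)) atTop))⁻¹)
    -- Liao–Rams generalization
    (hLR : ∀ s t : ℕ → ℝ, (∀ n, 1 ≤ s n) → (∀ n, 1 < t n) →
      {x : ℝ | x ∈ Set.Ioo (0 : ℝ) 1 ∧ Irrational x ∧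
        ∀ n, 1 ≤ n → s n ≤ (cfA x n : ℝ) ∧ (cfA x n : ℝ) ≤ s n * t n}.Nonempty →
      Tendsto s atTop atTop →
      Tendsto (fun n => Real.log (t n - 1) / Real.log (s n)) atTop (nhds 0) →
      dimH {x : ℝ | x ∈ Set.Ioo (0 : ℝ) 1 ∧ Irrational x ∧
          ∀ n, 1 ≤ n → s n ≤ (cfA x n : ℝ) ∧ (cfA x n : ℝ) ≤ s n * t n}
        = (ENNReal.ofReal (2 + Filter.limsup
            (fun n => Real.log (s (n + 1)) / ∑ k ∈ Finset.Icc 1 n, Real.log (s k)) atTop))⁻¹) :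
    dimH (levelSet (fun n => ∑ k ∈ Finset.Icc 1 n, c ^ (b ^ k)))
      = ENNReal.ofReal (1 / (b + 1)) :=
  stmt_11_general b c hb hc hLuczak hLR
end

section
/- Let 0 < β < 1, N ∈ ℕ, n_k = k^N, and define φ(n) = e^{n_k^β} + (n − n_k) for n_k ≤ n < n_{k+1}. Then limsup_{n→∞} (log log φ(n))/(log n) = lim_{n→∞} (log log φ(n))/(log n) = β. -/
/-!
On the block `k ^ N ≤ n < (k + 1) ^ N` we have `φ n = exp (a ^ β) + y` with `a = k ^ N` and
`0 ≤ y < 2 ^ N * a`. Since `log a ≤ a ^ β / β`, the summand `y` changes `log φ n` by at most a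
constant factor, so `log (log (φ n)) = β * log a + O(1) = β * log n + O(1)`. Dividing by
`log n → ∞` gives the limit `β`, hence also the `limsup`.
-/

open Filter Real Asymptotics Topology

theorem tendsto_div_of_isBigO_sub_mul {α : Type*} {l : Filter α} {f g : α → ℝ} {β : ℝ}
    (hg : Tendsto g l atTop) (h : (fun x => f x - β * g x) =O[l] fun _ => (1 : ℝ)) :
    Tendsto (fun x => f x / g x) l (𝓝 β) := by
  have hsmall : (fun x => f x - β * g x) =o[l] g :=
    h.trans_isLittleO ((isLittleO_one_left_iff ℝ).2 (tendsto_norm_atTop_atTop.comp hg))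
  have hlim : Tendsto (fun x => β + (f x - β * g x) / g x) l (𝓝 β) := by
    simpa using hsmall.tendsto_div_nhds_zero.const_add β
  refine hlim.congr' ?_
  filter_upwards [hg.eventually_ne_atTop 0] with x hx
  field_simp
  ring

theorem Nat.lt_two_pow_mul_pow_nthRoot {N n : ℕ} (hN : N ≠ 0) (hn : n ≠ 0) :
    n < 2 ^ N * Nat.nthRoot N n ^ N := by
  have hk : 1 ≤ Nat.nthRoot N n :=
    (Nat.le_nthRoot_iff hN).2 (by simpa using Nat.one_le_iff_ne_zero.2 hn)
  calc n < (Nat.nthRoot N n + 1) ^ N := Nat.lt_pow_nthRoot_add_one hN n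
    _ ≤ (2 * Nat.nthRoot N n) ^ N := Nat.pow_le_pow_left (by omega) N
    _ = 2 ^ N * Nat.nthRoot N n ^ N := mul_pow 2 _ N

namespace Real

theorem log_exp_add_le {t y : ℝ} (ht : 0 ≤ t) (hy : 0 ≤ y) :
    log (exp t + y) ≤ t + log (1 + y) := by
  have hle : exp t + y ≤ exp t * (1 + y) := by nlinarith [one_le_exp ht]
  calc log (exp t + y) ≤ log (exp t * (1 + y)) := log_le_log (by positivity) hle
    _ = t + log (1 + y) := by rw [log_mul (exp_ne_zero t) (by positivity), log_exp]

theorem log_exp_rpow_add_le {β a c y : ℝ} (hβ : 0 < β) (ha : 1 ≤ a) (hc : 1 ≤ c)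
    (hy : 0 ≤ y) (hyc : y ≤ c * a) :
    log (exp (a ^ β) + y) ≤ (1 + log (2 * c) + β⁻¹) * a ^ β := by
  have ht : 1 ≤ a ^ β := one_le_rpow ha hβ.le
  have hlog_one_add : log (1 + y) ≤ log (2 * c) + log a := by
    rw [← log_mul (by positivity) (by positivity)]
    exact log_le_log (by positivity) (by nlinarith)
  have hlog_a : log a ≤ a ^ β / β := log_le_rpow_div (by positivity) hβ
  have hlog_2c : 0 ≤ log (2 * c) := log_nonneg (by linarith)
  calc log (exp (a ^ β) + y) ≤ a ^ β + log (1 + y) := log_exp_add_le (by positivity) hy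
    _ ≤ a ^ β + log (2 * c) * a ^ β + a ^ β / β := by nlinarith
    _ = (1 + log (2 * c) + β⁻¹) * a ^ β := by ring

theorem rpow_le_log_exp_rpow_add {β a y : ℝ} (hy : 0 ≤ y) :
    a ^ β ≤ log (exp (a ^ β) + y) := by
  calc a ^ β = log (exp (a ^ β)) := (log_exp _).symm
    _ ≤ log (exp (a ^ β) + y) := log_le_log (exp_pos _) (by linarith)

theorem abs_log_log_exp_rpow_add_sub_le {β a c y : ℝ} (hβ : 0 < β) (ha : 1 ≤ a) (hc : 1 ≤ c)
    (hy : 0 ≤ y) (hyc : y ≤ c * a) :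
    |log (log (exp (a ^ β) + y)) - β * log a| ≤ log (1 + log (2 * c) + β⁻¹) := by
  have ht : 0 < a ^ β := by positivity
  have hD : 1 ≤ 1 + log (2 * c) + β⁻¹ := by
    have := log_nonneg (show (1 : ℝ) ≤ 2 * c by linarith)
    linarith [inv_pos.2 hβ]
  have hlog_rpow : log (a ^ β) = β * log a := log_rpow (by positivity) β
  have hlower := log_le_log ht (rpow_le_log_exp_rpow_add (β := β) hy)
  have hupper := log_le_log (ht.trans_le (rpow_le_log_exp_rpow_add hy))
    (log_exp_rpow_add_le hβ ha hc hy hyc)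
  rw [log_mul (by positivity) ht.ne', hlog_rpow] at hupper
  have hlog_D := log_nonneg hD
  rw [abs_sub_le_iff]
  constructor <;> linarith

end Real

theorem abs_log_log_sub_mul_log_le {β : ℝ} (hβ0 : 0 < β) {N : ℕ} (hN : 1 ≤ N)
    {φ : ℕ → ℝ}
    (hφ : ∀ k : ℕ, 1 ≤ k → ∀ n : ℕ, k ^ N ≤ n → n < (k + 1) ^ N →
      φ n = Real.exp (((k : ℝ) ^ N) ^ β) + ((n : ℝ) - (k : ℝ) ^ N)) {n : ℕ} (hn : n ≠ 0) :
    |log (log (φ n)) - β * log n| ≤ log (1 + log (2 * 2 ^ N) + β⁻¹) + β * (N * log 2) := by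
  have hN0 : N ≠ 0 := by omega
  set k := Nat.nthRoot N n
  have hk : 1 ≤ k := (Nat.le_nthRoot_iff hN0).2 (by simpa using Nat.one_le_iff_ne_zero.2 hn)
  have hkn : k ^ N ≤ n := Nat.pow_nthRoot_le_iff.2 (Or.inl hN0)
  have hnk : n < 2 ^ N * k ^ N := Nat.lt_two_pow_mul_pow_nthRoot hN0 hn
  set a : ℝ := (k : ℝ) ^ N
  have ha : 1 ≤ a := one_le_pow₀ (by exact_mod_cast hk)
  have han : a ≤ n := by simp only [a]; exact_mod_cast hkn
  have hna : (n : ℝ) ≤ 2 ^ N * a := by simp only [a]; exact_mod_cast hnk.le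
  rw [hφ k hk n hkn (Nat.lt_pow_nthRoot_add_one hN0 n)]
  have hφ_block := Real.abs_log_log_exp_rpow_add_sub_le hβ0 ha (one_le_pow₀ one_le_two)
    (sub_nonneg.2 han) (by linarith)
  have hlog_n : |log n - log a| ≤ N * log 2 := by
    have hlo := log_le_log (by positivity) han
    have hhi := log_le_log (by positivity) hna
    rw [log_mul (by positivity) (by positivity), log_pow] at hhi
    rw [abs_sub_le_iff]
    constructor <;> linarith
  calc |log (log (exp (a ^ β) + (n - a))) - β * log n|
      = |(log (log (exp (a ^ β) + (n - a))) - β * log a) - β * (log n - log a)| := by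
        congr 1; ring
    _ ≤ |log (log (exp (a ^ β) + (n - a))) - β * log a| + |β * (log n - log a)| := abs_sub _ _
    _ = |log (log (exp (a ^ β) + (n - a))) - β * log a| + β * |log n - log a| := by
        rw [abs_mul, abs_of_pos hβ0]
    _ ≤ log (1 + log (2 * 2 ^ N) + β⁻¹) + β * (N * log 2) := by gcongr

theorem stmt_13_general (β : ℝ) (hβ0 : 0 < β) (N : ℕ) (hN : 1 ≤ N)
    (φ : ℕ → ℝ)
    (hφ : ∀ k : ℕ, 1 ≤ k → ∀ n : ℕ, k ^ N ≤ n → n < (k + 1) ^ N →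
      φ n = Real.exp (((k : ℝ) ^ N) ^ β) + ((n : ℝ) - (k : ℝ) ^ N)) :
    Filter.limsup (fun n => Real.log (Real.log (φ n)) / Real.log n) atTop = β ∧
    Tendsto (fun n => Real.log (Real.log (φ n)) / Real.log n) atTop (nhds β) := by
  have hbounded : (fun n : ℕ => log (log (φ n)) - β * log n) =O[atTop] fun _ => (1 : ℝ) := by
    refine IsBigO.of_bound (log (1 + log (2 * 2 ^ N) + β⁻¹) + β * (N * log 2)) ?_
    filter_upwards [eventually_ne_atTop 0] with n hn
    simpa using abs_log_log_sub_mul_log_le hβ0 hN hφ hn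
  have hlim := tendsto_div_of_isBigO_sub_mul
    (tendsto_log_atTop.comp tendsto_natCast_atTop_atTop) hbounded
  exact ⟨hlim.limsup_eq, hlim⟩

theorem stmt_13 (β : ℝ) (hβ0 : 0 < β) (hβ1 : β < 1) (N : ℕ) (hN : 1 ≤ N)
    (φ : ℕ → ℝ)
    (hφ : ∀ k : ℕ, 1 ≤ k → ∀ n : ℕ, k ^ N ≤ n → n < (k + 1) ^ N →
      φ n = Real.exp (((k : ℝ) ^ N) ^ β) + ((n : ℝ) - (k : ℝ) ^ N)) :
    Filter.limsup (fun n => Real.log (Real.log (φ n)) / Real.log n) atTop = β ∧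
    Tendsto (fun n => Real.log (Real.log (φ n)) / Real.log n) atTop (nhds β) :=
  stmt_13_general β hβ0 N hN φ hφ
end

section
/- Let 0 < β < 1, N ∈ ℕ, n_k = k^N, M ∈ ℕ, and let H_M be the set of x with a_{n_k}(x) = ⌊e^{n_k^β} − e^{n_{k-1}^β}⌋ for k ≥ 2 and 1 ≤ a_i(x) ≤ M for all other indices i. Then H_M ⊆ E_{φ(n)}, where φ(n) = e^{n_k^β} + (n − n_k) for n_k ≤ n < n_{k+1}; i.e., every x ∈ H_M satisfies lim_{n→∞} s_n(x)/φ(n) = 1. -/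
open Filter MeasureTheory Set

/-!
Let `k ^ N ≤ n < (k + 1) ^ N` and split `s_n(x)` at the indices `j ^ N`, `j ≤ k`. The partial
quotients there are floors of the increments of `j ↦ exp ((j ^ N) ^ β)`, so their sum telescopes to
`exp ((k ^ N) ^ β)` up to an error of at most one per index; the other at most `n` quotients are
bounded by `M`. Hence `|s_n(x) - φ(n)| = O(n)`, while `φ(n) ≥ exp ((n / 2 ^ N) ^ β)` grows faster
than any power of `n`.
-/

open Finset Real

lemma exists_pow_le_lt_succ_pow {N n : ℕ} (hN : N ≠ 0) (hn : 1 ≤ n) :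
    ∃ k, 1 ≤ k ∧ k ^ N ≤ n ∧ n < (k + 1) ^ N := by
  have hex : ∃ k, n < (k + 1) ^ N := ⟨n, (Nat.lt_succ_self n).trans_le (Nat.le_self_pow hN _)⟩
  obtain ⟨k, hk⟩ : ∃ k, Nat.find hex = k := ⟨_, rfl⟩
  have hk0 : k ≠ 0 := by
    rintro rfl
    have := Nat.find_spec hex
    simp_all
  refine ⟨k, Nat.one_le_iff_ne_zero.2 hk0, ?_, hk ▸ Nat.find_spec hex⟩
  have := Nat.find_min hex (m := k - 1) (by omega)
  rwa [Nat.sub_add_cancel (Nat.one_le_iff_ne_zero.2 hk0), not_lt] at this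

lemma sum_le_sum_add_mul_card {ι : Type*} [DecidableEq ι] (a : ι → ℕ) (s t : Finset ι) {M : ℕ}
    (ha : ∀ i ∈ s, i ∉ t → a i ≤ M) :
    ∑ i ∈ s, a i ≤ ∑ i ∈ t, a i + M * #s := by
  rw [← sum_filter_add_sum_filter_not s (fun i => i ∈ t)]
  gcongr
  · exact fun i hi => (mem_filter.1 hi).2
  · calc ∑ i ∈ s with i ∉ t, a i ≤ #(s.filter (· ∉ t)) • M :=
          sum_le_card_nsmul _ _ _ fun i hi => ha i (mem_filter.1 hi).1 (mem_filter.1 hi).2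
      _ ≤ M * #s := by rw [smul_eq_mul, mul_comm]; gcongr; exact filter_subset _ _

lemma sum_range_succ_pow_le_sum_Icc (a : ℕ → ℕ) {N k n : ℕ} (hN : N ≠ 0) (hk : k ^ N ≤ n) :
    ∑ j ∈ range k, a ((j + 1) ^ N) ≤ ∑ i ∈ Icc 1 n, a i := by
  have hinj : Set.InjOn (fun j => (j + 1) ^ N) (Finset.range k : Set ℕ) := fun i _ j _ h =>
    Nat.succ_injective (Nat.pow_left_injective hN h)
  rw [← sum_image hinj]
  refine sum_le_sum_of_subset fun i hi => ?_
  obtain ⟨j, hj, rfl⟩ := mem_image.1 hi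
  exact mem_Icc.2 ⟨Nat.one_le_pow _ _ j.succ_pos,
    (Nat.pow_le_pow_left (mem_range.1 hj) N).trans hk⟩

lemma sum_Icc_le_sum_range_succ_pow_add (a : ℕ → ℕ) {N k n M : ℕ} (hN : N ≠ 0)
    (hn : n < (k + 1) ^ N) (ha : ∀ i, 1 ≤ i → (∀ j, 1 ≤ j → i ≠ j ^ N) → a i ≤ M) :
    ∑ i ∈ Icc 1 n, a i ≤ ∑ j ∈ range k, a ((j + 1) ^ N) + M * n := by
  calc ∑ i ∈ Icc 1 n, a i
      ≤ ∑ i ∈ (range k).image (fun j => (j + 1) ^ N), a i + M * #(Icc 1 n) := by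
        refine sum_le_sum_add_mul_card a _ _ fun i hi hit => ha i (mem_Icc.1 hi).1 ?_
        rintro j hj rfl
        refine hit (mem_image.2 ⟨j - 1, mem_range.2 ?_, by rw [Nat.sub_add_cancel hj]⟩)
        have := (Nat.pow_lt_pow_iff_left hN).1 ((mem_Icc.1 hi).2.trans_lt hn)
        omega
    _ ≤ ∑ j ∈ range k, a ((j + 1) ^ N) + M * n := by
        gcongr
        · exact sum_image_le_of_nonneg fun _ _ => Nat.zero_le _
        · simp

lemma abs_natFloor_sub_le {y : ℝ} (hy : 0 ≤ y) : |(⌊y⌋₊ : ℝ) - y| ≤ 1 := by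
  rw [abs_sub_comm, abs_le]
  constructor <;> linarith [Nat.floor_le hy, Nat.lt_floor_add_one y]

lemma abs_sum_natFloor_sub_sub_le {F : ℕ → ℝ} (hF : Monotone F) (m : ℕ) :
    |∑ j ∈ range m, (⌊F (j + 1) - F j⌋₊ : ℝ) - (F m - F 0)| ≤ m := by
  rw [← sum_range_sub, ← sum_sub_distrib]
  calc _ ≤ ∑ j ∈ range m, |(⌊F (j + 1) - F j⌋₊ : ℝ) - (F (j + 1) - F j)| := abs_sum_le_sum_abs _ _
    _ ≤ ∑ _j ∈ range m, (1 : ℝ) :=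
        sum_le_sum fun j _ => abs_natFloor_sub_le (sub_nonneg.2 (hF j.le_succ))
    _ = m := by simp

lemma tendsto_mul_exp_neg_div_rpow {c β : ℝ} (hc : 0 < c) (hβ : 0 < β) :
    Tendsto (fun x : ℝ => x * exp (-(x / c) ^ β)) atTop (nhds 0) := by
  have hu : Tendsto (fun x : ℝ => (x / c) ^ β) atTop atTop :=
    (tendsto_rpow_atTop hβ).comp (tendsto_id.atTop_div_const hc)
  have := ((tendsto_rpow_mul_exp_neg_mul_atTop_nhds_zero β⁻¹ 1 one_pos).const_mul c).comp hu
  rw [mul_zero] at this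
  refine this.congr' ?_
  filter_upwards [eventually_ge_atTop 0] with x hx
  simp only [Function.comp_apply, neg_mul, one_mul]
  rw [rpow_rpow_inv (div_nonneg hx hc.le) hβ.ne', ← mul_assoc, mul_div_cancel₀ _ hc.ne']

lemma abs_cfS_sub_le {β : ℝ} (hβ : 0 ≤ β) {N M k n : ℕ} {x : ℝ} (hN : N ≠ 0)
    (hspec : ∀ k : ℕ, 2 ≤ k →
      cfA x (k ^ N) = ⌊exp (((k : ℝ) ^ N) ^ β) - exp ((((k : ℝ) - 1) ^ N) ^ β)⌋₊)
    (hrest : ∀ i, 1 ≤ i → (∀ j, 1 ≤ j → i ≠ j ^ N) → cfA x i ≤ M)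
    (hk : 1 ≤ k) (hkn : k ^ N ≤ n) (hnk : n < (k + 1) ^ N) :
    |(cfS x n : ℝ) - (exp (((k : ℝ) ^ N) ^ β) + ((n : ℝ) - (k : ℝ) ^ N))| ≤
      cfA x 1 + exp 1 + (M + 2) * n := by
  obtain ⟨m, rfl⟩ : ∃ m, k = m + 1 := ⟨k - 1, by omega⟩
  set F : ℕ → ℝ := fun j => exp ((((j : ℝ) + 1) ^ N) ^ β)
  have hF : Monotone F := fun i j hij => by
    simp only [F]
    gcongr
  set S := ∑ j ∈ Finset.range (m + 1), cfA x ((j + 1) ^ N)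
  have hS : |(S : ℝ) - F m| ≤ cfA x 1 + exp 1 + m := by
    have hsplit : (S : ℝ) = cfA x 1 + ∑ j ∈ Finset.range m, (⌊F (j + 1) - F j⌋₊ : ℝ) := by
      simp only [S, sum_range_succ', zero_add, one_pow, Nat.cast_add, Nat.cast_sum]
      rw [add_comm]
      congr 1
      refine sum_congr rfl fun j _ => ?_
      rw [hspec (j + 1 + 1) (by omega)]
      simp only [F]
      push_cast
      ring_nf
    have hF0 : F 0 = exp 1 := by simp [F]
    have htel := abs_le.1 (abs_sum_natFloor_sub_sub_le hF m)
    rw [hF0] at htel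
    rw [hsplit, abs_le]
    constructor <;> linarith [exp_pos 1, (Nat.cast_nonneg (cfA x 1) : (0 : ℝ) ≤ _)]
  have hlow : (S : ℝ) ≤ cfS x n := by exact_mod_cast sum_range_succ_pow_le_sum_Icc _ hN hkn
  have hup : (cfS x n : ℝ) ≤ S + M * n := by
    exact_mod_cast sum_Icc_le_sum_range_succ_pow_add _ hN hnk hrest
  have hkn' : ((m + 1 : ℕ) : ℝ) ^ N ≤ n := by exact_mod_cast hkn
  have hmn : (m : ℝ) ≤ n := by
    have := Nat.le_self_pow hN (m + 1)
    exact_mod_cast (show m ≤ n by omega)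
  have hFm : F m = exp ((((m + 1 : ℕ) : ℝ) ^ N) ^ β) := by simp [F]
  have hS' := abs_le.1 hS
  rw [← hFm, abs_le]
  constructor <;> linarith [exp_pos 1, (Nat.cast_nonneg M : (0 : ℝ) ≤ _),
    (Nat.cast_nonneg n : (0 : ℝ) ≤ _), pow_nonneg (Nat.cast_nonneg (m + 1) : (0 : ℝ) ≤ _) N]

lemma div_two_pow_le_pow {N k n : ℕ} (hk : 1 ≤ k) (hn : n < (k + 1) ^ N) :
    (n : ℝ) / 2 ^ N ≤ (k : ℝ) ^ N := by
  rw [div_le_iff₀ (by positivity), ← mul_pow]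
  calc (n : ℝ) ≤ ((k + 1) ^ N : ℕ) := by exact_mod_cast hn.le
    _ ≤ ((k * 2) ^ N : ℕ) := by gcongr; omega
    _ = ((k : ℝ) * 2) ^ N := by push_cast; ring

theorem stmt_14_general (β : ℝ) (hβ0 : 0 < β) (N : ℕ) (hN : 1 ≤ N)
    (M : ℕ)
    (φ : ℕ → ℝ)
    (hφ : ∀ k : ℕ, 1 ≤ k → ∀ n : ℕ, k ^ N ≤ n → n < (k + 1) ^ N →
      φ n = Real.exp (((k : ℝ) ^ N) ^ β) + ((n : ℝ) - (k : ℝ) ^ N))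
    (x : ℝ)
    (hspec : ∀ k : ℕ, 2 ≤ k →
      cfA x (k ^ N) = ⌊Real.exp (((k : ℝ) ^ N) ^ β) - Real.exp ((((k : ℝ) - 1) ^ N) ^ β)⌋₊)
    (hrest : ∀ i : ℕ, 1 ≤ i → (∀ k : ℕ, 1 ≤ k → i ≠ k ^ N) →
      1 ≤ cfA x i ∧ cfA x i ≤ M) :
    Tendsto (fun n => (cfS x n : ℝ) / φ n) atTop (nhds 1) := by
  have hN0 : N ≠ 0 := Nat.one_le_iff_ne_zero.1 hN
  set C : ℝ := cfA x 1 + exp 1 + M + 2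
  have hmajorant : Tendsto (fun n : ℕ => C * ((n : ℝ) * exp (-((n : ℝ) / 2 ^ N) ^ β)))
      atTop (nhds 0) := by
    simpa using ((tendsto_mul_exp_neg_div_rpow (by positivity) hβ0).comp
      tendsto_natCast_atTop_atTop).const_mul C
  refine tendsto_sub_nhds_zero_iff.1 (squeeze_zero_norm' ?_ hmajorant)
  filter_upwards [eventually_ge_atTop 1] with n hn
  obtain ⟨k, hk, hkn, hnk⟩ := exists_pow_le_lt_succ_pow hN0 hn
  have hdist := abs_cfS_sub_le hβ0.le hN0 hspec (fun i hi h => (hrest i hi h).2) hk hkn hnk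
  rw [← hφ k hk n hkn hnk] at hdist
  have hφ_ge : exp (((n : ℝ) / 2 ^ N) ^ β) ≤ φ n := by
    rw [hφ k hk n hkn hnk]
    have : ((k : ℝ) ^ N) ≤ n := by exact_mod_cast hkn
    have := exp_le_exp.2 (rpow_le_rpow (by positivity) (div_two_pow_le_pow hk hnk) hβ0.le)
    linarith
  have hφ_pos : 0 < φ n := (exp_pos _).trans_le hφ_ge
  have hn' : (1 : ℝ) ≤ n := by exact_mod_cast hn
  rw [Real.norm_eq_abs, div_sub_one hφ_pos.ne', abs_div, abs_of_pos hφ_pos]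
  calc |(cfS x n : ℝ) - φ n| / φ n ≤ C * n / exp (((n : ℝ) / 2 ^ N) ^ β) := by
        refine div_le_div₀ (by positivity) (hdist.trans ?_) (exp_pos _) hφ_ge
        nlinarith [exp_pos 1, (Nat.cast_nonneg (cfA x 1) : (0 : ℝ) ≤ _)]
    _ = C * ((n : ℝ) * exp (-((n : ℝ) / 2 ^ N) ^ β)) := by rw [exp_neg]; ring

theorem stmt_14 (β : ℝ) (hβ0 : 0 < β) (hβ1 : β < 1) (N : ℕ) (hN : 1 ≤ N)
    (M : ℕ) (hM : 1 ≤ M)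
    (φ : ℕ → ℝ)
    (hφ : ∀ k : ℕ, 1 ≤ k → ∀ n : ℕ, k ^ N ≤ n → n < (k + 1) ^ N →
      φ n = Real.exp (((k : ℝ) ^ N) ^ β) + ((n : ℝ) - (k : ℝ) ^ N))
    (x : ℝ) (hx : x ∈ Set.Ioo (0 : ℝ) 1) (hirr : Irrational x)
    (hspec : ∀ k : ℕ, 2 ≤ k →
      cfA x (k ^ N) = ⌊Real.exp (((k : ℝ) ^ N) ^ β) - Real.exp ((((k : ℝ) - 1) ^ N) ^ β)⌋₊)
    (hrest : ∀ i : ℕ, 1 ≤ i → (∀ k : ℕ, 1 ≤ k → i ≠ k ^ N) →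
      1 ≤ cfA x i ∧ cfA x i ≤ M) :
    Tendsto (fun n => (cfS x n : ℝ) / φ n) atTop (nhds 1) :=
  stmt_14_general β hβ0 N hN M φ hφ x hspec hrest
end

section
/- For any finite sequence of positive integers (a_1,...,a_n) and any subset of indices n_1 < ... < n_t in {1,...,n}, the continuant satisfies q_n(a_1,...,a_n) ≤ q_{n−t}(ā) · ∏_{i=1}^t (a_{n_i} + 1), where ā is the sequence obtained by deleting the entries at indices n_1,...,n_t. -/
/-- The continuant of a finite sequence of partial quotients:
`K [] = 1`, `K [a] = a`, `K (a :: b :: t) = a * K (b :: t) + K t`. -/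
def contL : List ℕ → ℕ
  | [] => 1
  | [a] => a
  | a :: b :: t => a * contL (b :: t) + contL t

/-- Deleting the entries of `l` at the indices in `s`. -/
def deleteAt (l : List ℕ) (s : Finset (Fin l.length)) : List ℕ :=
  ((List.finRange l.length).filter (fun i => i ∉ s)).map l.get

/-!
Deleting one entry `a` costs at most a factor `a + 1`: `K (u ++ a :: v) ≤ (a + 1) * K (u ++ v)`.
When `u` has at least two entries, the recurrence `K (c :: d :: w) = c * K (d :: w) + K w` applied
to both sides reduces this to the same inequality for the two shorter prefixes; for `|u| ≤ 1` it is
a direct computation, using that prepending a positive entry does not decrease the continuant.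
The remaining entries form a sublist `l'` of `l`, so induction on the sublist relation performs the
deletions one at a time, the deleted entries being the multiset difference `l - l'`.
-/

lemma contL_le_contL_cons {b : ℕ} (hb : 1 ≤ b) (l : List ℕ) : contL l ≤ contL (b :: l) := by
  match l with
  | [] => exact hb
  | c :: l =>
    calc contL (c :: l) ≤ b * contL (c :: l) := Nat.le_mul_of_pos_left _ hb
      _ ≤ contL (b :: c :: l) := Nat.le_add_right _ _

lemma contL_cons_le (a : ℕ) {l : List ℕ} (hl : ∀ x ∈ l, 1 ≤ x) :
    contL (a :: l) ≤ (a + 1) * contL l := by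
  match l with
  | [] => simp [contL]
  | b :: l =>
    have := contL_le_contL_cons (hl b List.mem_cons_self) l
    show a * contL (b :: l) + contL l ≤ _
    nlinarith

lemma contL_append_cons_le (a : ℕ) {u v : List ℕ} (hu : ∀ x ∈ u, 1 ≤ x)
    (hv : ∀ x ∈ v, 1 ≤ x) : contL (u ++ a :: v) ≤ (a + 1) * contL (u ++ v) := by
  match u with
  | [] => exact contL_cons_le a hv
  | [c] =>
    have hc := hu c List.mem_cons_self
    match v with
    | [] =>
      simp only [List.singleton_append, contL]
      nlinarith
    | b :: w =>
      have := contL_le_contL_cons (hv b List.mem_cons_self) w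
      simp only [List.singleton_append, contL]
      nlinarith
  | c :: d :: u =>
    have h₁ := contL_append_cons_le a (u := d :: u)
      (fun x hx => hu x (List.mem_cons_of_mem c hx)) hv
    have h₂ := contL_append_cons_le a (u := u)
      (fun x hx => hu x (List.mem_cons_of_mem c (List.mem_cons_of_mem d hx))) hv
    simp only [List.cons_append, contL] at h₁ h₂ ⊢
    nlinarith

lemma contL_append_le_of_sublist {l' l : List ℕ} (h : List.Sublist l' l) {u : List ℕ}
    (hu : ∀ x ∈ u, 1 ≤ x) (hl : ∀ x ∈ l, 1 ≤ x) :
    contL (u ++ l) ≤ contL (u ++ l') * (((l : Multiset ℕ) - l').map (· + 1)).prod := by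
  induction h generalizing u with
  | slnil => simp
  | cons a h ih =>
    have hl' := fun x hx => hl x (List.mem_cons_of_mem a hx)
    rw [← Multiset.cons_coe, Multiset.cons_sub_of_le a h.subperm, Multiset.map_cons,
      Multiset.prod_cons, mul_left_comm]
    calc contL (u ++ a :: _) ≤ (a + 1) * contL (u ++ _) := contL_append_cons_le a hu hl'
      _ ≤ _ := Nat.mul_le_mul_left _ (ih hu hl')
  | cons_cons a _ ih =>
    have hua : ∀ x ∈ u ++ [a], 1 ≤ x := by
      simpa [or_imp, forall_and] using And.intro hu (hl a List.mem_cons_self)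
    have := ih hua (fun x hx => hl x (List.mem_cons_of_mem a hx))
    rw [← Multiset.cons_coe, ← Multiset.cons_coe, ← Multiset.singleton_add,
      ← Multiset.singleton_add, add_tsub_add_eq_tsub_left]
    simpa using this

lemma deleteAt_sublist (l : List ℕ) (s : Finset (Fin l.length)) :
    List.Sublist (deleteAt l s) l := by
  conv_rhs => rw [← List.map_get_finRange l]
  exact (List.filter_sublist).map _

lemma coe_sub_deleteAt (l : List ℕ) (s : Finset (Fin l.length)) :
    (l : Multiset ℕ) - deleteAt l s = s.val.map l.get := by
  have hsplit : (l : Multiset ℕ) = s.val.map l.get + deleteAt l s := by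
    have hU := (Finset.val_univ_fin l.length).symm
    conv_lhs => rw [← List.map_get_finRange l, ← Multiset.map_coe, hU,
      ← Multiset.filter_add_not (· ∈ s) Finset.univ.val, Multiset.map_add]
    rw [deleteAt, ← Multiset.map_coe, ← Multiset.filter_coe, hU]
    congr
    exact congrArg Finset.val (Finset.filter_mem_eq_inter.trans (Finset.univ_inter s))
  rw [hsplit, add_tsub_cancel_right]

theorem stmt_16 (l : List ℕ) (hl : ∀ a ∈ l, 1 ≤ a) (s : Finset (Fin l.length)) :
    contL l ≤ contL (deleteAt l s) * ∏ i ∈ s, (l.get i + 1) := by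
  have := contL_append_le_of_sublist (deleteAt_sublist l s) (u := []) (by simp) hl
  rwa [coe_sub_deleteAt, Multiset.map_map] at this
end

section
/- Let α ≥ 0 and define E'(α) = {x : a_n(x) = a_n(y) for n ≠ l^l, and a_{l^l}(x) = a_{l^l}(y) + l^{l+1} − (l−1)^l for all l ∈ ℕ, for some y with lim s_n(y)/n = α}. Define φ(n) = nα + (l−1)^l for (l−1)^{l−1} ≤ n < l^l, l ≥ 2. Then E'(α) ⊆ E_{φ(n)} = {x : lim_{n→∞} s_n(x)/φ(n) = 1}, and moreover liminf_{n→∞} φ(n)/n = α + e^{−1} and limsup_{n→∞} φ(n)/n = ∞. -/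
open Filter MeasureTheory Set

/-!
The increments `l ^ (l + 1) - (l - 1) ^ l` telescope, so on the block
`(L - 1) ^ (L - 1) ≤ n < L ^ L` the perturbation has added exactly `(L - 1) ^ L` to `s_n`,
which is also `φ n - n α`. Hence `s_n(x) / φ n - 1 = (s_n(y) - n α) / φ n`, and this tends to `0`
because `s_n(y) - n α = o(n)` while `φ n ≥ n α`.

On the same block `φ n / n - α = (L - 1) ^ L / n` decreases in `n`: at the right end
`n = L ^ L - 1` it is about `(1 - 1 / L) ^ L → e⁻¹`, and at the left end `n = (L - 1) ^ (L - 1)`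
it equals `L - 1 → ∞`.
-/

open Finset Topology

lemma pow_self_le_pow_self {a b : ℕ} (h : a ≤ b) : a ^ a ≤ b ^ b := by
  rcases Nat.eq_zero_or_pos b with rfl | hb
  · rw [Nat.le_zero.mp h]
  · exact (Nat.pow_le_pow_left h a).trans (Nat.pow_le_pow_right hb h)

lemma pow_self_lt_pow_self {a b : ℕ} (ha : 1 ≤ a) (h : a < b) : a ^ a < b ^ b :=
  (Nat.pow_lt_pow_left h (by omega)).trans_le (Nat.pow_le_pow_right (by omega) h.le)

lemma tendsto_pow_self_atTop : Tendsto (fun k : ℕ => k ^ k) atTop atTop :=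
  tendsto_atTop_mono' atTop (eventually_ne_atTop 0 |>.mono fun k hk => Nat.le_self_pow hk k)
    tendsto_id

lemma exists_lt_pow_self (n : ℕ) : ∃ L : ℕ, n < L ^ L :=
  ⟨n + 1, (Nat.lt_succ_self n).trans_le (Nat.le_self_pow n.succ_ne_zero _)⟩

def powSelfBlock (n : ℕ) : ℕ := Nat.find (exists_lt_pow_self n)

lemma lt_powSelfBlock_pow (n : ℕ) : n < powSelfBlock n ^ powSelfBlock n :=
  Nat.find_spec (exists_lt_pow_self n)

lemma powSelfBlock_spec {n : ℕ} (hn : 1 ≤ n) :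
    2 ≤ powSelfBlock n ∧ (powSelfBlock n - 1) ^ (powSelfBlock n - 1) ≤ n ∧
      n < powSelfBlock n ^ powSelfBlock n := by
  have hlt := lt_powSelfBlock_pow n
  have htwo : 2 ≤ powSelfBlock n := by
    by_contra! h
    interval_cases h : powSelfBlock n <;> simp at hlt <;> omega
  have hmin := Nat.find_min (exists_lt_pow_self n) (m := powSelfBlock n - 1)
    (Nat.sub_one_lt (by omega))
  exact ⟨htwo, not_lt.mp hmin, hlt⟩

lemma tendsto_powSelfBlock_atTop : Tendsto powSelfBlock atTop atTop := by
  refine tendsto_atTop.2 fun K => ?_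
  filter_upwards [eventually_ge_atTop (K ^ K)] with n hn
  by_contra! h
  exact absurd ((lt_powSelfBlock_pow n).trans_le (pow_self_le_pow_self h.le)) (not_lt.mpr hn)

lemma sum_range_succ_pow_succ_sub (m : ℕ) :
    ∑ i ∈ range m, ((i + 1) ^ (i + 2) - i ^ (i + 1)) = m ^ (m + 1) := by
  have hmono : Monotone fun i : ℕ => i ^ (i + 1) := monotone_nat_of_le_succ fun i =>
    (Nat.pow_le_pow_left i.le_succ _).trans (Nat.pow_le_pow_right i.succ_pos (by omega))
  simpa using sum_range_tsub hmono m

lemma Finset.sum_eq_sum_add_of_eq_on_sdiff {ι M : Type*} [DecidableEq ι] [AddCommMonoid M]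
    {s t : Finset ι} {f g : ι → M} {c : M} (hst : s ⊆ t) (hs : ∑ i ∈ s, f i = ∑ i ∈ s, g i + c)
    (hfg : ∀ i ∈ t \ s, f i = g i) : ∑ i ∈ t, f i = ∑ i ∈ t, g i + c := by
  rw [← sum_sdiff hst, ← sum_sdiff hst (f := g), hs, sum_congr rfl hfg, add_assoc]

lemma cfS_eq_add_of_perturb {x y : ℝ}
    (hA : ∀ n : ℕ, 1 ≤ n → (∀ l : ℕ, 1 ≤ l → n ≠ l ^ l) → cfA x n = cfA y n)
    (hB : ∀ l : ℕ, 1 ≤ l → cfA x (l ^ l) = cfA y (l ^ l) + (l ^ (l + 1) - (l - 1) ^ l))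
    {L n : ℕ} (hL : 2 ≤ L) (hLn : (L - 1) ^ (L - 1) ≤ n) (hnL : n < L ^ L) :
    cfS x n = cfS y n + (L - 1) ^ L := by
  have hmono : StrictMono fun i : ℕ => (i + 1) ^ (i + 1) := fun a b hab =>
    pow_self_lt_pow_self (by omega) (by omega)
  set S := (range (L - 1)).image fun i => (i + 1) ^ (i + 1)
  refine sum_eq_sum_add_of_eq_on_sdiff (s := S) ?_ ?_ ?_
  · intro j hj
    obtain ⟨i, hi, rfl⟩ := mem_image.mp hj
    have hiL := pow_self_le_pow_self (show i + 1 ≤ L - 1 by simp at hi; omega)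
    exact mem_Icc.mpr ⟨Nat.one_le_pow _ _ i.succ_pos, hiL.trans hLn⟩
  · rw [sum_image fun a _ b _ h => hmono.injective h, sum_image fun a _ b _ h => hmono.injective h,
      sum_congr rfl fun i _ => hB (i + 1) i.succ_pos, sum_add_distrib]
    simpa [show L - 1 + 1 = L by omega] using sum_range_succ_pow_succ_sub (L - 1)
  · intro j hj
    obtain ⟨hjn, hjS⟩ := Finset.mem_sdiff.mp hj
    refine hA j (mem_Icc.mp hjn).1 fun l hl hjl => ?_
    rcases lt_or_ge l L with hlL | hLl
    · exact hjS <| mem_image.mpr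
        ⟨l - 1, mem_range.mpr (by omega), by rw [hjl, Nat.sub_add_cancel hl]⟩
    · have hjL : L ^ L ≤ j := hjl ▸ pow_self_le_pow_self hLl
      have hjn' := (mem_Icc.mp hjn).2
      omega

lemma tendsto_add_div_mul_add {s c : ℕ → ℝ} {α : ℝ} (hα : 0 < α)
    (hs : Tendsto (fun n => s n / n) atTop (𝓝 α)) (hc : ∀ n, 0 ≤ c n) :
    Tendsto (fun n => (s n + c n) / (n * α + c n)) atTop (𝓝 1) := by
  rw [tendsto_iff_norm_sub_tendsto_zero]
  have hbound : Tendsto (fun n => |s n / n - α| / α) atTop (𝓝 0) := by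
    simpa using ((hs.sub_const α).abs).div_const α
  refine squeeze_zero' (Eventually.of_forall fun _ => norm_nonneg _) ?_ hbound
  filter_upwards [eventually_gt_atTop 0] with n hn
  have hn : (0 : ℝ) < n := Nat.cast_pos.mpr hn
  have hden : 0 < n * α + c n := by nlinarith [hc n]
  have hnum : s n + c n - (n * α + c n) = n * (s n / n - α) := by field_simp; ring
  rw [Real.norm_eq_abs, div_sub_one hden.ne', hnum, abs_div, abs_mul, abs_of_pos hn,
    abs_of_pos hden, div_le_div_iff₀ hden hα]
  nlinarith [abs_nonneg (s n / n - α), hc n]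

lemma cast_sub_one_pow_div_pow {L : ℕ} (hL : 1 ≤ L) :
    ((L - 1 : ℕ) : ℝ) ^ L / (L : ℝ) ^ L = (1 + (-1) / (L : ℝ)) ^ L := by
  have hL0 : (L : ℝ) ≠ 0 := by positivity
  rw [← div_pow, Nat.cast_sub hL]
  congr 1
  field_simp
  ring

section Phi

variable {α : ℝ} {φ : ℕ → ℝ}
  (hφ : ∀ l : ℕ, 2 ≤ l → ∀ n : ℕ, (l - 1) ^ (l - 1) ≤ n → n < l ^ l →
    φ n = (n : ℝ) * α + ((l - 1 : ℕ) : ℝ) ^ l)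
include hφ

lemma phi_div_eq {n : ℕ} (hn : 1 ≤ n) :
    φ n / n = α + ((powSelfBlock n - 1 : ℕ) : ℝ) ^ powSelfBlock n / n := by
  obtain ⟨h2, hle, hlt⟩ := powSelfBlock_spec hn
  have hn0 : (n : ℝ) ≠ 0 := by positivity
  rw [hφ _ h2 n hle hlt, add_div, mul_div_cancel_left₀ α hn0]

lemma one_sub_inv_pow_le_phi_div {n : ℕ} (hn : 1 ≤ n) :
    α + (1 + (-1) / (powSelfBlock n : ℝ)) ^ powSelfBlock n ≤ φ n / n := by
  obtain ⟨h2, -, hlt⟩ := powSelfBlock_spec hn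
  rw [phi_div_eq hφ hn, ← cast_sub_one_pow_div_pow (by omega)]
  gcongr
  exact_mod_cast hlt.le

lemma tendsto_phi_div_pow_self_sub_one :
    Tendsto (fun k : ℕ => φ (k ^ k - 1) / (k ^ k - 1 : ℕ)) atTop (𝓝 (α + (Real.exp 1)⁻¹)) := by
  have hpow : Tendsto (fun k : ℕ => (k : ℝ) ^ k) atTop atTop := by
    simpa [Function.comp_def] using
      (tendsto_natCast_atTop_atTop (R := ℝ)).comp tendsto_pow_self_atTop
  have hlim := (Real.tendsto_one_add_div_pow_exp (-1)).div
    (hpow.inv_tendsto_atTop.const_sub 1) (by norm_num)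
  rw [Real.exp_neg, sub_zero, div_one] at hlim
  refine (hlim.const_add α).congr' ?_
  filter_upwards [eventually_ge_atTop 2] with k hk
  have hne : (k : ℝ) ^ k - 1 ≠ 0 :=
    sub_ne_zero.mpr (one_lt_pow₀ (by exact_mod_cast hk : (1 : ℝ) < k) (by omega)).ne'
  have hblock : (k - 1) ^ (k - 1) ≤ k ^ k - 1 := by
    have := pow_self_lt_pow_self (show 1 ≤ k - 1 by omega) (show k - 1 < k by omega)
    omega
  have hpos : 1 ≤ k ^ k := Nat.one_le_pow k k (by omega)
  rw [hφ k hk _ hblock (by omega), Pi.div_apply, Pi.inv_apply,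
    ← cast_sub_one_pow_div_pow (by omega)]
  push_cast [hpos]
  have hk0 : (k : ℝ) ^ k ≠ 0 := by positivity
  field_simp

lemma phi_div_pow_self {k : ℕ} (hk : 1 ≤ k) : φ (k ^ k) / (k ^ k : ℕ) = α + k := by
  have h := hφ (k + 1) (by omega) (k ^ k) (by simp) (pow_self_lt_pow_self hk (by omega))
  simp only [Nat.add_sub_cancel] at h
  have hk0 : (k : ℝ) ≠ 0 := by positivity
  rw [h]
  push_cast
  field_simp
  ring

lemma tendsto_cfS_div_phi (hα : 0 < α) {x y : ℝ}
    (hy : Tendsto (fun n => (cfS y n : ℝ) / n) atTop (𝓝 α))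
    (hA : ∀ n : ℕ, 1 ≤ n → (∀ l : ℕ, 1 ≤ l → n ≠ l ^ l) → cfA x n = cfA y n)
    (hB : ∀ l : ℕ, 1 ≤ l → cfA x (l ^ l) = cfA y (l ^ l) + (l ^ (l + 1) - (l - 1) ^ l)) :
    Tendsto (fun n => (cfS x n : ℝ) / φ n) atTop (𝓝 1) := by
  refine (tendsto_add_div_mul_add (c := fun n => ((powSelfBlock n - 1 : ℕ) : ℝ) ^ powSelfBlock n)
    hα hy fun n => by positivity).congr' ?_
  filter_upwards [eventually_ge_atTop 1] with n hn
  obtain ⟨h2, hle, hlt⟩ := powSelfBlock_spec hn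
  rw [cfS_eq_add_of_perturb hA hB h2 hle hlt, hφ _ h2 n hle hlt]
  push_cast
  rfl

lemma liminf_phi_div :
    liminf (fun n => ((φ n / n : ℝ) : EReal)) atTop = ((α + (Real.exp 1)⁻¹ : ℝ) : EReal) := by
  have hlower : Tendsto (fun n => ((α + (1 + (-1) / (powSelfBlock n : ℝ)) ^ powSelfBlock n : ℝ)
      : EReal)) atTop (𝓝 ((α + (Real.exp 1)⁻¹ : ℝ) : EReal)) := by
    rw [EReal.tendsto_coe, ← Real.exp_neg]
    exact ((Real.tendsto_one_add_div_pow_exp (-1)).comp tendsto_powSelfBlock_atTop).const_add α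
  have hsub : Tendsto (fun k : ℕ => k ^ k - 1) atTop atTop :=
    (tendsto_sub_atTop_nat 1).comp tendsto_pow_self_atTop
  refine le_antisymm ?_ ?_
  · exact hsub.liminf_le_liminf_comp.trans_eq
      (EReal.tendsto_coe.mpr (tendsto_phi_div_pow_self_sub_one hφ)).liminf_eq
  · rw [← hlower.liminf_eq]
    exact liminf_le_liminf (eventually_ge_atTop 1 |>.mono fun n hn =>
      EReal.coe_le_coe_iff.mpr (one_sub_inv_pow_le_phi_div hφ hn))

lemma limsup_phi_div : limsup (fun n => ((φ n / n : ℝ) : EReal)) atTop = ⊤ := by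
  have hpow : Tendsto (fun k : ℕ => ((φ (k ^ k) / (k ^ k : ℕ) : ℝ) : EReal)) atTop (𝓝 ⊤) := by
    refine EReal.tendsto_coe_atTop.comp ((tendsto_atTop_add_const_left atTop α
      tendsto_natCast_atTop_atTop).congr' ?_)
    filter_upwards [eventually_ge_atTop 1] with k hk
    exact (phi_div_pow_self hφ hk).symm
  exact top_le_iff.mp <| hpow.limsup_eq.symm.trans_le <|
    tendsto_pow_self_atTop.limsup_comp_le_limsup (u := fun n => ((φ n / n : ℝ) : EReal))

end Phi

theorem stmt_17 (α : ℝ) (hα : 0 < α) (φ : ℕ → ℝ)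
    (hφ : ∀ l : ℕ, 2 ≤ l → ∀ n : ℕ, (l - 1) ^ (l - 1) ≤ n → n < l ^ l →
      φ n = (n : ℝ) * α + ((l - 1 : ℕ) : ℝ) ^ l) :
    (∀ x : ℝ, x ∈ Set.Ioo (0 : ℝ) 1 → Irrational x →
      (∃ y : ℝ, y ∈ Set.Ioo (0 : ℝ) 1 ∧ Irrational y ∧
        Tendsto (fun n => (cfS y n : ℝ) / n) atTop (nhds α) ∧
        (∀ n : ℕ, 1 ≤ n → (∀ l : ℕ, 1 ≤ l → n ≠ l ^ l) → cfA x n = cfA y n) ∧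
        (∀ l : ℕ, 1 ≤ l → cfA x (l ^ l) = cfA y (l ^ l) + (l ^ (l + 1) - (l - 1) ^ l))) →
      Tendsto (fun n => (cfS x n : ℝ) / φ n) atTop (nhds 1)) ∧
    Filter.liminf (fun n => ((φ n / n : ℝ) : EReal)) atTop
      = ((α + (Real.exp 1)⁻¹ : ℝ) : EReal) ∧
    Filter.limsup (fun n => ((φ n / n : ℝ) : EReal)) atTop = (⊤ : EReal) :=
  ⟨fun _ _ _ ⟨_, _, _, hy, hA, hB⟩ => tendsto_cfS_div_phi hφ hα hy hA hB,
    liminf_phi_div hφ, limsup_phi_div hφ⟩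
end
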